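/- arXiv:1711.00390 — 5 statements merged into one kernel-verified Lean document; each statement's English description precedes it below -/
import Mathlib

section
/- With notation as in the context, for every $n \geq 1$: regarded as a rational function in the single variable $z_n$ over the field $F(z_1, \dots, z_{n-1})$, the function $I_n$ has no pole at $z_n = 0$, and its value at $z_n = 0$ equals $\gamma \cdot I_{n-1}(z_1, \dots, z_{n-1})$. (This is the residue computation $\mathrm{Res}_{z_n = 0}\, I_n(z_1,\dots,z_n)/z_n = \gamma \cdot I_{n-1}(z_1,\dots,z_{n-1})$, equation (3.22) of the paper.) -/
open scoped BigOperators

noncomputable section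

/-- `ζ(w) = (1 - w q₁)(1 - w q₂) / ((1 - w)(1 - w q₁ q₂))`. -/
def zetaF {L : Type*} [Field L] (q₁ q₂ w : L) : L :=
  ((1 - w * q₁) * (1 - w * q₂)) / ((1 - w) * (1 - w * (q₁ * q₂)))

/-- The rational expression `I_n` of equation (3.17) of the paper, evaluated at
`z_1 = z 0, …, z_n = z (n-1)`, where `ι : F →+* L` embeds the field of constants.
(By convention `I_0 = 1`, which this definition satisfies as all products are empty.) -/
def Ifun {F L : Type*} [Field F] [Field L] (ι : F →+* L) (q₁ q₂ m : F)
    (r : ℕ) (x x' : Fin r → F) (n : ℕ) (z : ℕ → L) : L :=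
  ((∏ i ∈ Finset.range (n - 1), (1 - ι q₁ * ι q₂ * z (i + 1) / z i)) *
      ∏ i ∈ Finset.range n, ∏ j ∈ Finset.Ico (i + 1) n, zetaF (ι q₁) (ι q₂) (z j / z i))⁻¹ *
    ∏ i ∈ Finset.range n,
      (∏ a : Fin r, (1 - ι m * ι (x a) / (z i * (ι q₁ * ι q₂)))) /
        ∏ a : Fin r, (1 - ι (x' a) / z i)

namespace Aux
open Polynomial

variable {K : Type*} [Field K]

def val0 (f : RatFunc K) : K := (f.num.eval 0) / (f.denom.eval 0)
def Reg (f : RatFunc K) : Prop := (f.denom.eval 0) ≠ 0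

lemma reg_div (p q : K[X]) (hq : q.eval 0 ≠ 0) :
    Reg (algebraMap K[X] (RatFunc K) p / algebraMap K[X] (RatFunc K) q) ∧
      val0 (algebraMap K[X] (RatFunc K) p / algebraMap K[X] (RatFunc K) q)
        = p.eval 0 / q.eval 0 := by
  have hq0 : q ≠ 0 := fun h => hq (by simp [h])
  set f := algebraMap K[X] (RatFunc K) p / algebraMap K[X] (RatFunc K) q with hf
  obtain ⟨t, ht⟩ : f.denom ∣ q := RatFunc.denom_div_dvd p q
  have hreg : Reg f := by
    intro h0
    apply hq
    rw [ht, Polynomial.eval_mul, h0, zero_mul]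
  refine ⟨hreg, ?_⟩
  have hcross : f.num * q = p * f.denom := by
    apply RatFunc.algebraMap_injective K
    rw [map_mul, map_mul]
    rw [← div_eq_div_iff (RatFunc.algebraMap_ne_zero (f.denom_ne_zero))
      (RatFunc.algebraMap_ne_zero hq0)]
    rw [RatFunc.num_div_denom]
  have heval := congrArg (Polynomial.eval 0) hcross
  simp only [Polynomial.eval_mul] at heval
  rw [val0, div_eq_div_iff hreg hq]
  exact heval

lemma reg_poly (p : K[X]) :
    Reg (algebraMap K[X] (RatFunc K) p) ∧ val0 (algebraMap K[X] (RatFunc K) p) = p.eval 0 := by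
  have := reg_div p 1 (by simp)
  simpa using this

lemma reg_one : Reg (1 : RatFunc K) ∧ val0 (1 : RatFunc K) = 1 := by
  simpa using reg_poly (1 : K[X])

lemma reg_C (c : K) : Reg (RatFunc.C c) ∧ val0 (RatFunc.C c) = c := by
  simpa [← RatFunc.algebraMap_C] using reg_poly (Polynomial.C c)

lemma reg_mul {f g : RatFunc K} (hf : Reg f) (hg : Reg g) :
    Reg (f * g) ∧ val0 (f * g) = val0 f * val0 g := by
  have h : f * g = algebraMap K[X] (RatFunc K) (f.num * g.num) /
      algebraMap K[X] (RatFunc K) (f.denom * g.denom) := by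
    rw [map_mul, map_mul, ← div_mul_div_comm, RatFunc.num_div_denom, RatFunc.num_div_denom]
  have h2 := reg_div (f.num * g.num) (f.denom * g.denom)
    (by simp only [Polynomial.eval_mul]; exact mul_ne_zero hf hg)
  rw [← h] at h2
  refine ⟨h2.1, ?_⟩
  rw [h2.2, val0, val0, Polynomial.eval_mul, Polynomial.eval_mul, div_mul_div_comm]

lemma reg_inv {f : RatFunc K} (hf : Reg f) (h0 : val0 f ≠ 0) :
    Reg f⁻¹ ∧ val0 f⁻¹ = (val0 f)⁻¹ := by
  have hnum : f.num.eval 0 ≠ 0 := by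
    intro h; apply h0; rw [val0, h, zero_div]
  have h : f⁻¹ = algebraMap K[X] (RatFunc K) f.denom / algebraMap K[X] (RatFunc K) f.num := by
    conv_lhs => rw [← RatFunc.num_div_denom f]
    rw [inv_div]
  have h2 := reg_div f.denom f.num hnum
  rw [← h] at h2
  refine ⟨h2.1, ?_⟩
  rw [h2.2, val0, inv_div]

lemma reg_prod {ι : Type*} (s : Finset ι) (f : ι → RatFunc K) (h : ∀ i ∈ s, Reg (f i)) :
    Reg (∏ i ∈ s, f i) ∧ val0 (∏ i ∈ s, f i) = ∏ i ∈ s, val0 (f i) := by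
  classical
  induction s using Finset.cons_induction with
  | empty => simpa using reg_one
  | cons a s ha ih =>
    rw [Finset.prod_cons, Finset.prod_cons]
    have ihs := ih (fun i hi => h i (Finset.mem_cons_of_mem hi))
    have := reg_mul (h a (Finset.mem_cons_self a s)) ihs.1
    exact ⟨this.1, by rw [this.2, ihs.2]⟩


lemma ddd {L : Type*} [Field L] (a b c : L) (hc : c ≠ 0) : a / c / (b / c) = a / b := by
  rcases eq_or_ne b 0 with rfl | hb
  · simp
  · field_simp

lemma main {F : Type*} [Field F] (ιK : F →+* K)
    (r : ℕ) (q₁ q₂ m : F) (x x' : Fin r → F)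
    (hq₁ : q₁ ≠ 0) (hq₂ : q₂ ≠ 0) (hx' : ∀ a, x' a ≠ 0)
    (k : ℕ) (w : ℕ → K) (hw : ∀ j, j < k → w j ≠ 0)
    (hkey : ∀ c : F, c ≠ 0 → ∀ i j, i < k → j < k → i ≠ j → 1 - w j / w i * ιK c ≠ 0)
    (zf : ℕ → RatFunc K) (hzk : zf k = RatFunc.X)
    (hz : ∀ j, j < k → zf j = RatFunc.C (w j))
    (zp : ℕ → K) (hzp : ∀ j, j < k → zp j = w j) :
    Reg (Ifun ((RatFunc.C).comp ιK) q₁ q₂ m r x x' (k + 1) zf) ∧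
      val0 (Ifun ((RatFunc.C).comp ιK) q₁ q₂ m r x x' (k + 1) zf) =
        ιK ((m ^ r * ∏ a : Fin r, x a) / ((q₁ * q₂) ^ r * ∏ a : Fin r, x' a)) *
          Ifun ιK q₁ q₂ m r x x' k zp := by
  have hι : ∀ c : F, c ≠ 0 → ιK c ≠ 0 := fun c hc h =>
    hc (ιK.injective (by rw [h, map_zero]))
  set wext : ℕ → K := fun j => if j = k then 0 else w j with hwext
  have hwe : ∀ j, j < k → wext j = w j := fun j hj => if_neg (by omega)
  have h0 : wext k = 0 := by simp [hwext]
  set vA : ℕ → K := fun i => 1 - ιK q₁ * ιK q₂ * wext (i + 1) / wext i with hvA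
  set vB : ℕ → ℕ → K := fun i j => zetaF (ιK q₁) (ιK q₂) (wext j / wext i) with hvB
  set vC : ℕ → K := fun i =>
    (∏ a : Fin r, (1 - ιK m * ιK (x a) / (wext i * (ιK q₁ * ιK q₂)))) /
      ∏ a : Fin r, (1 - ιK (x' a) / wext i) with hvC
  set γK : K := ιK ((m ^ r * ∏ a : Fin r, x a) / ((q₁ * q₂) ^ r * ∏ a : Fin r, x' a)) with hγ
  -- the three kinds of factors
  have hA : ∀ i ∈ Finset.range k,
      (Reg (1 - ((RatFunc.C).comp ιK) q₁ * ((RatFunc.C).comp ιK) q₂ * zf (i + 1) / zf i) ∧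
        val0 (1 - ((RatFunc.C).comp ιK) q₁ * ((RatFunc.C).comp ιK) q₂ * zf (i + 1) / zf i)
          = vA i) ∧ vA i ≠ 0 := by
    intro i hi
    rw [Finset.mem_range] at hi
    simp only [RingHom.comp_apply]
    by_cases hik : i + 1 = k
    · have heq : 1 - RatFunc.C (ιK q₁) * RatFunc.C (ιK q₂) * zf (i + 1) / zf i
          = algebraMap K[X] (RatFunc K)
            (1 - Polynomial.C (ιK q₁ * ιK q₂ / w i) * Polynomial.X) := by
        rw [hik, hzk, hz i hi]
        simp only [map_sub, map_one, map_mul, map_div₀, map_inv₀, RatFunc.algebraMap_C,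
          RatFunc.algebraMap_X]
        ring
      have hval : vA i = 1 := by
        simp only [hvA]
        rw [hik, h0]
        simp
      obtain ⟨r1, v1⟩ := reg_poly (K := K) (1 - Polynomial.C (ιK q₁ * ιK q₂ / w i) * Polynomial.X)
      rw [heq, hval]
      exact ⟨⟨r1, by rw [v1]; simp⟩, one_ne_zero⟩
    · have hi1 : i + 1 < k := by omega
      have hvAi : vA i = 1 - ιK q₁ * ιK q₂ * w (i + 1) / w i := by
        simp only [hvA, hwe _ hi, hwe _ hi1]
      have heq : 1 - RatFunc.C (ιK q₁) * RatFunc.C (ιK q₂) * zf (i + 1) / zf i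
          = RatFunc.C (vA i) := by
        rw [hz i hi, hz (i + 1) hi1, hvAi]
        simp only [map_sub, map_one, map_mul, map_div₀]
      obtain ⟨r1, v1⟩ := reg_C (vA i)
      refine ⟨⟨by rw [heq]; exact r1, by rw [heq]; exact v1⟩, ?_⟩
      rw [hvAi]
      have h2 : 1 - ιK q₁ * ιK q₂ * w (i + 1) / w i
          = 1 - w (i + 1) / w i * ιK (q₁ * q₂) := by rw [map_mul]; ring
      rw [h2]
      exact hkey (q₁ * q₂) (mul_ne_zero hq₁ hq₂) i (i + 1) hi hi1 (by omega)
  have hB : ∀ i ∈ Finset.range (k + 1), ∀ j ∈ Finset.Ico (i + 1) (k + 1),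
      (Reg (zetaF (((RatFunc.C).comp ιK) q₁) (((RatFunc.C).comp ιK) q₂) (zf j / zf i)) ∧
        val0 (zetaF (((RatFunc.C).comp ιK) q₁) (((RatFunc.C).comp ιK) q₂) (zf j / zf i))
          = vB i j) ∧ vB i j ≠ 0 := by
    intro i hi j hj
    rw [Finset.mem_range] at hi
    rw [Finset.mem_Ico] at hj
    simp only [RingHom.comp_apply]
    by_cases hjk : j = k
    · have hik : i < k := by omega
      have heq : zetaF (RatFunc.C (ιK q₁)) (RatFunc.C (ιK q₂)) (zf j / zf i)
          = algebraMap K[X] (RatFunc K)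
              ((1 - Polynomial.C (ιK q₁ / w i) * Polynomial.X) *
                (1 - Polynomial.C (ιK q₂ / w i) * Polynomial.X)) /
            algebraMap K[X] (RatFunc K)
              ((1 - Polynomial.C (w i)⁻¹ * Polynomial.X) *
                (1 - Polynomial.C (ιK q₁ * ιK q₂ / w i) * Polynomial.X)) := by
        rw [hjk, hzk, hz i hik, zetaF]
        simp only [map_mul, map_sub, map_one, map_div₀, map_inv₀, RatFunc.algebraMap_C,
          RatFunc.algebraMap_X]
        ring
      have hval : vB i j = 1 := by
        simp only [hvB]
        rw [hjk, h0]
        simp [zetaF]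
      obtain ⟨r1, v1⟩ := reg_div (K := K)
        ((1 - Polynomial.C (ιK q₁ / w i) * Polynomial.X) *
          (1 - Polynomial.C (ιK q₂ / w i) * Polynomial.X))
        ((1 - Polynomial.C (w i)⁻¹ * Polynomial.X) *
          (1 - Polynomial.C (ιK q₁ * ιK q₂ / w i) * Polynomial.X)) (by simp)
      rw [heq, hval]
      exact ⟨⟨r1, by rw [v1]; simp⟩, one_ne_zero⟩
    · have hik : i < k := by omega
      have hjk' : j < k := by omega
      have hij : i ≠ j := by omega
      have hvBij : vB i j = zetaF (ιK q₁) (ιK q₂) (w j / w i) := by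
        simp only [hvB, hwe _ hik, hwe _ hjk']
      have heq : zetaF (RatFunc.C (ιK q₁)) (RatFunc.C (ιK q₂)) (zf j / zf i)
          = RatFunc.C (vB i j) := by
        rw [hz j hjk', hz i hik, hvBij, zetaF, zetaF]
        simp only [map_div₀, map_mul, map_sub, map_one]
      obtain ⟨r1, v1⟩ := reg_C (vB i j)
      refine ⟨⟨by rw [heq]; exact r1, by rw [heq]; exact v1⟩, ?_⟩
      rw [hvBij, zetaF]
      refine div_ne_zero (mul_ne_zero ?_ ?_) (mul_ne_zero ?_ ?_)
      · exact hkey q₁ hq₁ i j hik hjk' hij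
      · exact hkey q₂ hq₂ i j hik hjk' hij
      · have := hkey 1 one_ne_zero i j hik hjk' hij
        rwa [map_one, mul_one] at this
      · rw [← map_mul]
        exact hkey (q₁ * q₂) (mul_ne_zero hq₁ hq₂) i j hik hjk' hij
  have hC : ∀ i ∈ Finset.range (k + 1),
      Reg ((∏ a : Fin r, (1 - ((RatFunc.C).comp ιK) m * ((RatFunc.C).comp ιK) (x a) /
            (zf i * (((RatFunc.C).comp ιK) q₁ * ((RatFunc.C).comp ιK) q₂)))) /
          ∏ a : Fin r, (1 - ((RatFunc.C).comp ιK) (x' a) / zf i)) ∧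
        val0 ((∏ a : Fin r, (1 - ((RatFunc.C).comp ιK) m * ((RatFunc.C).comp ιK) (x a) /
            (zf i * (((RatFunc.C).comp ιK) q₁ * ((RatFunc.C).comp ιK) q₂)))) /
          ∏ a : Fin r, (1 - ((RatFunc.C).comp ιK) (x' a) / zf i))
          = if i = k then γK else vC i := by
    intro i hi
    rw [Finset.mem_range] at hi
    simp only [RingHom.comp_apply]
    by_cases hik : i = k
    · rw [if_pos hik, hik, hzk]
      have hX : (RatFunc.X : RatFunc K) ^ r ≠ 0 := pow_ne_zero _ RatFunc.X_ne_zero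
      have h1 : (∏ a : Fin r, (1 - RatFunc.C (ιK m) * RatFunc.C (ιK (x a)) /
            (RatFunc.X * (RatFunc.C (ιK q₁) * RatFunc.C (ιK q₂)))))
          = algebraMap K[X] (RatFunc K)
              (∏ a : Fin r, (Polynomial.X - Polynomial.C (ιK m * ιK (x a) / (ιK q₁ * ιK q₂))))
            / RatFunc.X ^ r := by
        rw [map_prod, show (RatFunc.X : RatFunc K) ^ r = ∏ _a : Fin r, (RatFunc.X : RatFunc K)
          from by simp [Finset.prod_const], ← Finset.prod_div_distrib]
        refine Finset.prod_congr rfl fun a _ => ?_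
        rw [map_sub, RatFunc.algebraMap_X, RatFunc.algebraMap_C, sub_div,
          div_self RatFunc.X_ne_zero]
        simp only [map_div₀, map_mul, div_div]
        ring
      have h2 : (∏ a : Fin r, (1 - RatFunc.C (ιK (x' a)) / RatFunc.X))
          = algebraMap K[X] (RatFunc K)
              (∏ a : Fin r, (Polynomial.X - Polynomial.C (ιK (x' a)))) / RatFunc.X ^ r := by
        rw [map_prod, show (RatFunc.X : RatFunc K) ^ r = ∏ _a : Fin r, (RatFunc.X : RatFunc K)
          from by simp [Finset.prod_const], ← Finset.prod_div_distrib]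
        refine Finset.prod_congr rfl fun a _ => ?_
        rw [map_sub, RatFunc.algebraMap_X, RatFunc.algebraMap_C, sub_div,
          div_self RatFunc.X_ne_zero]
      rw [h1, h2, ddd _ _ _ hX]
      have hQ : (∏ a : Fin r, (Polynomial.X - Polynomial.C (ιK (x' a)))).eval 0 ≠ 0 := by
        rw [Polynomial.eval_prod]
        refine Finset.prod_ne_zero_iff.2 fun a _ => ?_
        simp only [Polynomial.eval_sub, Polynomial.eval_X, Polynomial.eval_C, zero_sub,
          neg_ne_zero]
        exact hι _ (hx' a)
      obtain ⟨r1, v1⟩ := reg_div _ _ hQ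
      refine ⟨r1, ?_⟩
      rw [v1, hγ]
      rw [Polynomial.eval_prod, Polynomial.eval_prod]
      simp only [Polynomial.eval_sub, Polynomial.eval_X, Polynomial.eval_C, zero_sub]
      have hneg : ∀ (u : Fin r → K), ∏ a : Fin r, (-(u a)) = (-1) ^ r * ∏ a : Fin r, u a := by
        intro u
        rw [show ((-1 : K) ^ r) = ∏ _a : Fin r, (-1 : K) from by simp [Finset.prod_const],
          ← Finset.prod_mul_distrib]
        simp
      rw [hneg, hneg, mul_div_mul_left _ _
        (pow_ne_zero r (neg_ne_zero.2 (one_ne_zero (α := K))))]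
      rw [map_div₀, map_mul, map_mul, map_pow, map_pow, map_prod, map_prod]
      rw [Finset.prod_div_distrib, Finset.prod_mul_distrib]
      simp only [Finset.prod_const, Finset.card_univ, Fintype.card_fin, map_mul]
      ring
    · rw [if_neg hik]
      have hik' : i < k := by omega
      have hvCi : vC i = (∏ a : Fin r, (1 - ιK m * ιK (x a) / (w i * (ιK q₁ * ιK q₂)))) /
          ∏ a : Fin r, (1 - ιK (x' a) / w i) := by
        simp only [hvC, hwe _ hik']
      have heq : (∏ a : Fin r, (1 - RatFunc.C (ιK m) * RatFunc.C (ιK (x a)) /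
            (zf i * (RatFunc.C (ιK q₁) * RatFunc.C (ιK q₂))))) /
          (∏ a : Fin r, (1 - RatFunc.C (ιK (x' a)) / zf i)) = RatFunc.C (vC i) := by
        rw [hz i hik', hvCi, map_div₀, map_prod, map_prod]
        congr 1
        · exact Finset.prod_congr rfl fun a _ => by
            rw [map_sub, map_one, map_div₀, map_mul, map_mul, map_mul]
        · exact Finset.prod_congr rfl fun a _ => by
            rw [map_sub, map_one, map_div₀]
      obtain ⟨r1, v1⟩ := reg_C (vC i)
      exact ⟨by rw [heq]; exact r1, by rw [heq]; exact v1⟩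
  -- assemble
  simp only [Ifun, Nat.add_sub_cancel]
  have HA : Reg (∏ i ∈ Finset.range k,
        (1 - (RatFunc.C.comp ιK) q₁ * (RatFunc.C.comp ιK) q₂ * zf (i + 1) / zf i)) ∧
      val0 (∏ i ∈ Finset.range k,
        (1 - (RatFunc.C.comp ιK) q₁ * (RatFunc.C.comp ιK) q₂ * zf (i + 1) / zf i))
        = ∏ i ∈ Finset.range k, vA i := by
    obtain ⟨h1, h2⟩ := reg_prod (Finset.range k)
      (fun i => 1 - (RatFunc.C.comp ιK) q₁ * (RatFunc.C.comp ιK) q₂ * zf (i + 1) / zf i)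
      (fun i hi => (hA i hi).1.1)
    exact ⟨h1, h2.trans (Finset.prod_congr rfl fun i hi => (hA i hi).1.2)⟩
  have HBin : ∀ i ∈ Finset.range (k + 1),
      Reg (∏ j ∈ Finset.Ico (i + 1) (k + 1),
        zetaF ((RatFunc.C.comp ιK) q₁) ((RatFunc.C.comp ιK) q₂) (zf j / zf i)) ∧
      val0 (∏ j ∈ Finset.Ico (i + 1) (k + 1),
        zetaF ((RatFunc.C.comp ιK) q₁) ((RatFunc.C.comp ιK) q₂) (zf j / zf i))
        = ∏ j ∈ Finset.Ico (i + 1) (k + 1), vB i j := by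
    intro i hi
    obtain ⟨h1, h2⟩ := reg_prod (Finset.Ico (i + 1) (k + 1))
      (fun j => zetaF ((RatFunc.C.comp ιK) q₁) ((RatFunc.C.comp ιK) q₂) (zf j / zf i))
      (fun j hj => (hB i hi j hj).1.1)
    exact ⟨h1, h2.trans (Finset.prod_congr rfl fun j hj => (hB i hi j hj).1.2)⟩
  have HB : Reg (∏ i ∈ Finset.range (k + 1), ∏ j ∈ Finset.Ico (i + 1) (k + 1),
        zetaF ((RatFunc.C.comp ιK) q₁) ((RatFunc.C.comp ιK) q₂) (zf j / zf i)) ∧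
      val0 (∏ i ∈ Finset.range (k + 1), ∏ j ∈ Finset.Ico (i + 1) (k + 1),
        zetaF ((RatFunc.C.comp ιK) q₁) ((RatFunc.C.comp ιK) q₂) (zf j / zf i))
        = ∏ i ∈ Finset.range (k + 1), ∏ j ∈ Finset.Ico (i + 1) (k + 1), vB i j := by
    obtain ⟨h1, h2⟩ := reg_prod (Finset.range (k + 1))
      (fun i => ∏ j ∈ Finset.Ico (i + 1) (k + 1),
        zetaF ((RatFunc.C.comp ιK) q₁) ((RatFunc.C.comp ιK) q₂) (zf j / zf i))
      (fun i hi => (HBin i hi).1)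
    exact ⟨h1, h2.trans (Finset.prod_congr rfl fun i hi => (HBin i hi).2)⟩
  have HC : Reg (∏ i ∈ Finset.range (k + 1),
        ((∏ a : Fin r, (1 - (RatFunc.C.comp ιK) m * (RatFunc.C.comp ιK) (x a) /
            (zf i * ((RatFunc.C.comp ιK) q₁ * (RatFunc.C.comp ιK) q₂)))) /
          ∏ a : Fin r, (1 - (RatFunc.C.comp ιK) (x' a) / zf i))) ∧
      val0 (∏ i ∈ Finset.range (k + 1),
        ((∏ a : Fin r, (1 - (RatFunc.C.comp ιK) m * (RatFunc.C.comp ιK) (x a) /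
            (zf i * ((RatFunc.C.comp ιK) q₁ * (RatFunc.C.comp ιK) q₂)))) /
          ∏ a : Fin r, (1 - (RatFunc.C.comp ιK) (x' a) / zf i)))
        = (∏ i ∈ Finset.range k, vC i) * γK := by
    obtain ⟨h1, h2⟩ := reg_prod (Finset.range (k + 1))
      (fun i => (∏ a : Fin r, (1 - (RatFunc.C.comp ιK) m * (RatFunc.C.comp ιK) (x a) /
            (zf i * ((RatFunc.C.comp ιK) q₁ * (RatFunc.C.comp ιK) q₂)))) /
          ∏ a : Fin r, (1 - (RatFunc.C.comp ιK) (x' a) / zf i))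
      (fun i hi => (hC i hi).1)
    refine ⟨h1, h2.trans ?_⟩
    rw [Finset.prod_congr rfl (fun i hi => (hC i hi).2), Finset.prod_range_succ, if_pos rfl]
    congr 1
    exact Finset.prod_congr rfl fun i hi =>
      if_neg (by rw [Finset.mem_range] at hi; omega)
  have hABne : (∏ i ∈ Finset.range k, vA i) *
      (∏ i ∈ Finset.range (k + 1), ∏ j ∈ Finset.Ico (i + 1) (k + 1), vB i j) ≠ 0 :=
    mul_ne_zero (Finset.prod_ne_zero_iff.2 fun i hi => (hA i hi).2)
      (Finset.prod_ne_zero_iff.2 fun i hi =>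
        Finset.prod_ne_zero_iff.2 fun j hj => (hB i hi j hj).2)
  obtain ⟨rAB, vABeq⟩ := reg_mul HA.1 HB.1
  obtain ⟨rI, vIeq⟩ := reg_inv rAB (by rw [vABeq, HA.2, HB.2]; exact hABne)
  obtain ⟨rT, vTeq⟩ := reg_mul rI HC.1
  refine ⟨rT, ?_⟩
  rw [vTeq, vIeq, vABeq, HA.2, HB.2, HC.2]
  -- remaining identity in K
  have eA : ∏ i ∈ Finset.range k, vA i
      = ∏ i ∈ Finset.range (k - 1), (1 - ιK q₁ * ιK q₂ * zp (i + 1) / zp i) := by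
    have h1 : ∏ i ∈ Finset.range (k - 1), vA i = ∏ i ∈ Finset.range k, vA i := by
      refine Finset.prod_subset (Finset.range_subset_range.2 (by omega)) (fun i hi hni => ?_)
      rw [Finset.mem_range] at hi hni
      have hik : i + 1 = k := by omega
      simp only [hvA]
      rw [hik, h0]
      simp
    rw [← h1]
    refine Finset.prod_congr rfl fun i hi => ?_
    rw [Finset.mem_range] at hi
    simp only [hvA]
    rw [hwe _ (by omega), hwe _ (by omega), hzp _ (by omega), hzp _ (by omega)]
  have eB : ∏ i ∈ Finset.range (k + 1), ∏ j ∈ Finset.Ico (i + 1) (k + 1), vB i j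
      = ∏ i ∈ Finset.range k, ∏ j ∈ Finset.Ico (i + 1) k,
          zetaF (ιK q₁) (ιK q₂) (zp j / zp i) := by
    have h1 : ∏ i ∈ Finset.range k, (∏ j ∈ Finset.Ico (i + 1) (k + 1), vB i j)
        = ∏ i ∈ Finset.range (k + 1), (∏ j ∈ Finset.Ico (i + 1) (k + 1), vB i j) := by
      refine Finset.prod_subset (Finset.range_subset_range.2 (by omega)) (fun i hi hni => ?_)
      rw [Finset.mem_range] at hi hni
      have : i = k := by omega
      subst this
      rw [show Finset.Ico (i + 1) (i + 1) = ∅ from Finset.Ico_self _]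
      simp
    rw [← h1]
    refine Finset.prod_congr rfl fun i hi => ?_
    rw [Finset.mem_range] at hi
    have h2 : ∏ j ∈ Finset.Ico (i + 1) k, vB i j
        = ∏ j ∈ Finset.Ico (i + 1) (k + 1), vB i j := by
      refine Finset.prod_subset (Finset.Ico_subset_Ico_right (by omega)) (fun j hj hnj => ?_)
      rw [Finset.mem_Ico] at hj hnj
      have hjk : j = k := by omega
      simp only [hvB]
      rw [hjk, h0]
      simp [zetaF]
    rw [← h2]
    refine Finset.prod_congr rfl fun j hj => ?_
    rw [Finset.mem_Ico] at hj
    simp only [hvB]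
    rw [hwe _ (by omega), hwe _ (by omega), hzp _ (by omega), hzp _ (by omega)]
  have eC : ∏ i ∈ Finset.range k, vC i
      = ∏ i ∈ Finset.range k,
          ((∏ a : Fin r, (1 - ιK m * ιK (x a) / (zp i * (ιK q₁ * ιK q₂)))) /
            ∏ a : Fin r, (1 - ιK (x' a) / zp i)) := by
    refine Finset.prod_congr rfl fun i hi => ?_
    rw [Finset.mem_range] at hi
    simp only [hvC]
    rw [hwe _ hi, hzp _ hi]
  rw [← eA, ← eB, ← eC]
  ring


end Aux

/-- Regarded as a rational function in the single variable `z_n` over the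
field `F(z_1, …, z_{n-1})`, the function `I_n` has no pole at `z_n = 0`, and its value at
`z_n = 0` equals `γ ⬝ I_{n-1}(z_1, …, z_{n-1})`, where
`γ = m^r ∏ x_a / (q^r ∏ x'_a)`. -/
theorem stmt_1 {F : Type} [Field F] (r : ℕ) (hr : 1 ≤ r) (q₁ q₂ m : F)
    (x x' : Fin r → F) (hq₁ : q₁ ≠ 0) (hq₂ : q₂ ≠ 0) (hm : m ≠ 0)
    (hx : ∀ a, x a ≠ 0) (hx' : ∀ a, x' a ≠ 0) (n : ℕ) (hn : 1 ≤ n) :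
    -- `K = F(z_1, …, z_{n-1})`, the rational function field in the variables other than `z_n`
    let K := FractionRing (MvPolynomial {j : ℕ // j < n ∧ j ≠ n - 1} F)
    let ιK : F →+* K :=
      (algebraMap (MvPolynomial {j : ℕ // j < n ∧ j ≠ n - 1} F) K).comp MvPolynomial.C
    let Z : {j : ℕ // j < n ∧ j ≠ n - 1} → K := fun s =>
      algebraMap (MvPolynomial {j : ℕ // j < n ∧ j ≠ n - 1} F) K (MvPolynomial.X s)
    -- `I_n`, regarded as a one-variable rational function in `z_n` over `K`
    let In : RatFunc K := Ifun ((RatFunc.C).comp ιK) q₁ q₂ m r x x' n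
      (fun j => if h : j < n ∧ j ≠ n - 1 then RatFunc.C (Z ⟨j, h⟩) else RatFunc.X)
    -- `I_{n-1}(z_1, …, z_{n-1})`, an element of `K`
    let Iprev : K := Ifun ιK q₁ q₂ m r x x' (n - 1)
      (fun j => if h : j < n ∧ j ≠ n - 1 then Z ⟨j, h⟩ else 1)
    -- no pole at `z_n = 0`, and the value there is `γ ⬝ I_{n-1}`
    Polynomial.eval 0 (RatFunc.denom In) ≠ 0 ∧
      Polynomial.eval 0 (RatFunc.num In) / Polynomial.eval 0 (RatFunc.denom In) =
        ιK ((m ^ r * ∏ a : Fin r, x a) / ((q₁ * q₂) ^ r * ∏ a : Fin r, x' a)) * Iprev := by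

  obtain ⟨k, rfl⟩ : ∃ k, n = k + 1 := ⟨n - 1, by omega⟩
  intro K ιK Z In Iprev
  set w : ℕ → K := fun j => if h : j < k + 1 ∧ j ≠ k + 1 - 1 then Z ⟨j, h⟩ else 1 with hwdef
  have hZne : ∀ s, Z s ≠ 0 := fun s =>
    (map_ne_zero_iff _ (IsFractionRing.injective
      (MvPolynomial {j : ℕ // j < k + 1 ∧ j ≠ k + 1 - 1} F) K)).2 (MvPolynomial.X_ne_zero s)
  have hw : ∀ j, j < k → w j ≠ 0 := by
    intro j hj
    have hcj : j < k + 1 ∧ j ≠ k + 1 - 1 := by omega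
    rw [hwdef]
    simp only [dif_pos hcj]
    exact hZne _
  have hkey : ∀ c : F, c ≠ 0 → ∀ i j, i < k → j < k → i ≠ j → 1 - w j / w i * ιK c ≠ 0 := by
    intro c hc i j hik hjk hij heq
    have hci : i < k + 1 ∧ i ≠ k + 1 - 1 := by omega
    have hcj : j < k + 1 ∧ j ≠ k + 1 - 1 := by omega
    rw [hwdef] at heq
    simp only [dif_pos hci, dif_pos hcj] at heq
    have h3 : Z ⟨j, hcj⟩ / Z ⟨i, hci⟩ * ιK c = 1 := (sub_eq_zero.mp heq).symm
    rw [div_mul_eq_mul_div, div_eq_iff (hZne _), one_mul] at h3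
    have h4 : (MvPolynomial.X ⟨j, hcj⟩ * MvPolynomial.C c :
        MvPolynomial {j : ℕ // j < k + 1 ∧ j ≠ k + 1 - 1} F) = MvPolynomial.X ⟨i, hci⟩ := by
      apply IsFractionRing.injective
        (MvPolynomial {j : ℕ // j < k + 1 ∧ j ≠ k + 1 - 1} F) K
      rw [map_mul]
      exact h3
    have h5 := congrArg (MvPolynomial.eval
      (fun t : {j : ℕ // j < k + 1 ∧ j ≠ k + 1 - 1} =>
        if t = (⟨j, hcj⟩ : {j : ℕ // j < k + 1 ∧ j ≠ k + 1 - 1}) then (0 : F) else 1)) h4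
    simp only [map_mul, MvPolynomial.eval_X, MvPolynomial.eval_C, Subtype.mk.injEq] at h5
    simp [hij] at h5
  have hzk : (fun j => if h : j < k + 1 ∧ j ≠ k + 1 - 1 then RatFunc.C (Z ⟨j, h⟩)
      else RatFunc.X) k = RatFunc.X := by
    have hnk : ¬(k < k + 1 ∧ k ≠ k + 1 - 1) := by omega
    simp only [dif_neg hnk]
  have hz : ∀ j, j < k → (fun j => if h : j < k + 1 ∧ j ≠ k + 1 - 1 then RatFunc.C (Z ⟨j, h⟩)
      else RatFunc.X) j = RatFunc.C (w j) := by
    intro j hj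
    have hcj : j < k + 1 ∧ j ≠ k + 1 - 1 := by omega
    rw [hwdef]
    simp only [dif_pos hcj]
  have H := Aux.main ιK r q₁ q₂ m x x' hq₁ hq₂ hx' k w hw hkey _ hzk hz w (fun j hj => rfl)
  exact ⟨H.1, H.2⟩
end
end

section
/- With notation as in the context, for every $n \geq 1$: the rational function $w \mapsto I_n(w^{-1}, z_2, \dots, z_n)$, regarded as a rational function in the single variable $w$ over the field $F(z_2, \dots, z_n)$, has no pole at $w = 0$, and its value at $w = 0$ equals $I_{n-1}(z_2, \dots, z_n)$. (This is the residue computation $\mathrm{Res}_{z_1 = \infty}\, I_n(z_1,\dots,z_n)/z_1 = I_{n-1}(z_2,\dots,z_n)$, equation (3.21) of the paper.) -/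
open scoped BigOperators

noncomputable section

lemma zetaF_map {K L : Type*} [Field K] [Field L] (f : K →+* L) (a b v : K) :
    f (zetaF a b v) = zetaF (f a) (f b) (f v) := by
  simp [zetaF, map_div₀]

lemma eval0_helper {K : Type*} [Field K] (f : RatFunc K) (p q : Polynomial K)
    (hq : q.eval 0 ≠ 0) (hfq : f * algebraMap (Polynomial K) (RatFunc K) q
      = algebraMap (Polynomial K) (RatFunc K) p) :
    f.denom.eval 0 ≠ 0 ∧ f.num.eval 0 / f.denom.eval 0 = p.eval 0 / q.eval 0 := by
  have hq0 : q ≠ 0 := fun h => hq (by simp [h])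
  have hf : f = algebraMap _ _ p / algebraMap _ _ q := by
    rw [eq_div_iff (RatFunc.algebraMap_ne_zero hq0), hfq]
  have hcross : f.num * q = p * f.denom := (RatFunc.num_mul_eq_mul_denom_iff hq0).mpr hf
  have hdvd : f.denom ∣ q := (RatFunc.denom_dvd hq0).mpr ⟨p, hf⟩
  have hden : f.denom.eval 0 ≠ 0 := by
    obtain ⟨c, hc⟩ := hdvd
    intro h
    apply hq
    rw [hc, Polynomial.eval_mul, h, zero_mul]
  refine ⟨hden, ?_⟩
  rw [div_eq_div_iff hden hq]
  have := congrArg (Polynomial.eval 0) hcross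
  simpa [Polynomial.eval_mul, mul_comm] using this

lemma Ifun_congr {F L : Type*} [Field F] [Field L] (ι : F →+* L) (q₁ q₂ m : F)
    (r : ℕ) (x x' : Fin r → F) (n : ℕ) {z₁ z₂ : ℕ → L}
    (h : ∀ j < n, z₁ j = z₂ j) :
    Ifun ι q₁ q₂ m r x x' n z₁ = Ifun ι q₁ q₂ m r x x' n z₂ := by
  have e1 : (∏ i ∈ Finset.range (n - 1), (1 - ι q₁ * ι q₂ * z₁ (i + 1) / z₁ i))
      = ∏ i ∈ Finset.range (n - 1), (1 - ι q₁ * ι q₂ * z₂ (i + 1) / z₂ i) := by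
    refine Finset.prod_congr rfl fun i hi => ?_
    rw [Finset.mem_range] at hi
    rw [h i (by omega), h (i + 1) (by omega)]
  have e2 : (∏ i ∈ Finset.range n, ∏ j ∈ Finset.Ico (i + 1) n,
        zetaF (ι q₁) (ι q₂) (z₁ j / z₁ i))
      = ∏ i ∈ Finset.range n, ∏ j ∈ Finset.Ico (i + 1) n,
        zetaF (ι q₁) (ι q₂) (z₂ j / z₂ i) := by
    refine Finset.prod_congr rfl fun i hi => ?_
    rw [Finset.mem_range] at hi
    refine Finset.prod_congr rfl fun j hj => ?_
    rw [Finset.mem_Ico] at hj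
    rw [h i (by omega), h j (by omega)]
  have e3 : (∏ i ∈ Finset.range n,
        (∏ a : Fin r, (1 - ι m * ι (x a) / (z₁ i * (ι q₁ * ι q₂)))) /
          ∏ a : Fin r, (1 - ι (x' a) / z₁ i))
      = ∏ i ∈ Finset.range n,
        (∏ a : Fin r, (1 - ι m * ι (x a) / (z₂ i * (ι q₁ * ι q₂)))) /
          ∏ a : Fin r, (1 - ι (x' a) / z₂ i) := by
    refine Finset.prod_congr rfl fun i hi => ?_
    rw [Finset.mem_range] at hi
    rw [h i (by omega)]
  unfold Ifun
  rw [e1, e2, e3]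

lemma master {F K : Type*} [Field F] [Field K] (ι : F →+* K) (q₁ q₂ m : F) (r : ℕ)
    (x x' : Fin r → F) (k : ℕ) (w : ℕ → K) :
    ∃ N D : Polynomial K, N.eval 0 = 1 ∧ D.eval 0 = 1 ∧
      Ifun ((RatFunc.C (K := K)).comp ι) q₁ q₂ m r x x' (k + 1)
          (fun j => if j = 0 then RatFunc.X⁻¹ else RatFunc.C (w (j - 1))) *
        algebraMap (Polynomial K) (RatFunc K) D =
      RatFunc.C (Ifun ι q₁ q₂ m r x x' k w) * algebraMap (Polynomial K) (RatFunc K) N := by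
  classical
  set φ := algebraMap (Polynomial K) (RatFunc K) with hφ
  set lin : K → Polynomial K := fun c => 1 - Polynomial.C c * Polynomial.X with hlin
  have hφlin : ∀ c : K, φ (lin c) = 1 - RatFunc.C c * RatFunc.X := by
    intro c
    simp [hφ, hlin, map_sub, map_mul, RatFunc.algebraMap_C, RatFunc.algebraMap_X]
  have hlineval : ∀ c : K, (lin c).eval 0 = 1 := by intro c; simp [hlin]
  set zf : ℕ → RatFunc K := fun j => if j = 0 then RatFunc.X⁻¹ else RatFunc.C (w (j - 1))
    with hzf
  have hzf0 : zf 0 = RatFunc.X⁻¹ := rfl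
  have hzfs : ∀ j : ℕ, zf (j + 1) = RatFunc.C (w j) := by intro j; simp [hzf]
  set Pa : Polynomial K := ∏ j ∈ Finset.range k, (lin (w j * ι q₁) * lin (w j * ι q₂)) with hPa
  set Pb : Polynomial K :=
    ∏ j ∈ Finset.range k, (lin (w j) * lin (w j * (ι q₁ * ι q₂))) with hPb
  set Pm : Polynomial K := ∏ a : Fin r, lin (ι m * ι (x a) / (ι q₁ * ι q₂)) with hPm
  set Px : Polynomial K := ∏ a : Fin r, lin (ι (x' a)) with hPx
  set u : Polynomial K := if k = 0 then 1 else lin (ι q₁ * ι q₂ * w 0) with hu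
  have hPaev : Pa.eval 0 = 1 := by simp [hPa, Polynomial.eval_prod, hlineval]
  have hPbev : Pb.eval 0 = 1 := by simp [hPb, Polynomial.eval_prod, hlineval]
  have hPmev : Pm.eval 0 = 1 := by simp [hPm, Polynomial.eval_prod, hlineval]
  have hPxev : Px.eval 0 = 1 := by simp [hPx, Polynomial.eval_prod, hlineval]
  have huev : u.eval 0 = 1 := by
    rw [hu]; split <;> simp [hlineval]
  have hφne : ∀ p : Polynomial K, p.eval 0 = 1 → φ p ≠ 0 := by
    intro p hp
    exact RatFunc.algebraMap_ne_zero (fun h => by simp [h] at hp)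
  refine ⟨Pb * Pm, u * Pa * Px, ?_, ?_, ?_⟩
  · simp [Polynomial.eval_mul, hPbev, hPmev]
  · simp [Polynomial.eval_mul, huev, hPaev, hPxev]
  -- the main identity
  set s1 : K := ∏ i ∈ Finset.range (k - 1), (1 - ι q₁ * ι q₂ * w (i + 1) / w i) with hs1
  set s2 : K := ∏ i ∈ Finset.range k, ∏ j ∈ Finset.Ico (i + 1) k,
    zetaF (ι q₁) (ι q₂) (w j / w i) with hs2
  set s3 : K := ∏ i ∈ Finset.range k,
      (∏ a : Fin r, (1 - ι m * ι (x a) / (w i * (ι q₁ * ι q₂)))) /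
        ∏ a : Fin r, (1 - ι (x' a) / w i) with hs3
  have HT1 : (∏ i ∈ Finset.range k,
        (1 - RatFunc.C (ι q₁) * RatFunc.C (ι q₂) * zf (i + 1) / zf i))
      = φ u * RatFunc.C s1 := by
    cases k with
    | zero => simp [hu, hs1]
    | succ k' =>
      rw [Finset.prod_range_succ']
      have h0 : 1 - RatFunc.C (ι q₁) * RatFunc.C (ι q₂) * zf (0 + 1) / zf 0 = φ u := by
        rw [hzfs, hzf0, div_inv_eq_mul, hu, if_neg (Nat.succ_ne_zero k'), hφlin,
          map_mul, map_mul]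
      rw [h0]
      have hsh : (∏ i ∈ Finset.range k',
            (1 - RatFunc.C (ι q₁) * RatFunc.C (ι q₂) * zf (i + 1 + 1) / zf (i + 1)))
          = RatFunc.C s1 := by
        rw [hs1, Nat.succ_sub_one, map_prod]
        refine Finset.prod_congr rfl fun i _ => ?_
        rw [hzfs, hzfs]
        simp [map_sub, map_div₀, map_mul]
      rw [hsh]
      ring
  have HT2 : (∏ i ∈ Finset.range (k + 1), ∏ j ∈ Finset.Ico (i + 1) (k + 1),
        zetaF (RatFunc.C (ι q₁)) (RatFunc.C (ι q₂)) (zf j / zf i))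
      = (φ Pa / φ Pb) * RatFunc.C s2 := by
    rw [Finset.prod_range_succ']
    have h0 : (∏ j ∈ Finset.Ico (0 + 1) (k + 1),
          zetaF (RatFunc.C (ι q₁)) (RatFunc.C (ι q₂)) (zf j / zf 0))
        = φ Pa / φ Pb := by
      rw [Finset.prod_Ico_eq_prod_range]
      simp only [Nat.add_sub_cancel]
      have : ∀ j ∈ Finset.range k,
          zetaF (RatFunc.C (ι q₁)) (RatFunc.C (ι q₂)) (zf (1 + j) / zf 0)
            = φ (lin (w j * ι q₁) * lin (w j * ι q₂)) /
              φ (lin (w j) * lin (w j * (ι q₁ * ι q₂))) := by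
        intro j _
        rw [Nat.add_comm 1 j, hzfs, hzf0, div_inv_eq_mul]
        simp only [zetaF, map_mul, hφlin]
        ring
      rw [Finset.prod_congr rfl this, Finset.prod_div_distrib, ← map_prod, ← map_prod,
        ← hPa, ← hPb]
    rw [h0]
    have hsh : (∏ i ∈ Finset.range k, ∏ j ∈ Finset.Ico (i + 1 + 1) (k + 1),
          zetaF (RatFunc.C (ι q₁)) (RatFunc.C (ι q₂)) (zf j / zf (i + 1)))
        = RatFunc.C s2 := by
      rw [hs2, map_prod]
      refine Finset.prod_congr rfl fun i _ => ?_
      rw [map_prod, Finset.prod_Ico_eq_prod_range, Finset.prod_Ico_eq_prod_range]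
      have hb : k + 1 - (i + 1 + 1) = k - (i + 1) := by omega
      rw [hb]
      refine Finset.prod_congr rfl fun j _ => ?_
      have hix : i + 1 + 1 + j = (i + 1 + j) + 1 := by omega
      rw [hix, hzfs, hzfs, zetaF_map, map_div₀]
    rw [hsh]
    ring
  have HT3 : (∏ i ∈ Finset.range (k + 1),
        (∏ a : Fin r, (1 - RatFunc.C (ι m) * RatFunc.C (ι (x a)) /
            (zf i * (RatFunc.C (ι q₁) * RatFunc.C (ι q₂))))) /
          ∏ a : Fin r, (1 - RatFunc.C (ι (x' a)) / zf i))
      = (φ Pm / φ Px) * RatFunc.C s3 := by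
    rw [Finset.prod_range_succ']
    have h0 : (∏ a : Fin r, (1 - RatFunc.C (ι m) * RatFunc.C (ι (x a)) /
            (zf 0 * (RatFunc.C (ι q₁) * RatFunc.C (ι q₂))))) /
          (∏ a : Fin r, (1 - RatFunc.C (ι (x' a)) / zf 0))
        = φ Pm / φ Px := by
      rw [hzf0]
      have hnum : ∀ a : Fin r, (1 - RatFunc.C (ι m) * RatFunc.C (ι (x a)) /
            (RatFunc.X⁻¹ * (RatFunc.C (ι q₁) * RatFunc.C (ι q₂))))
          = φ (lin (ι m * ι (x a) / (ι q₁ * ι q₂))) := by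
        intro a
        rw [hφlin, map_div₀, map_mul, map_mul]
        rw [div_eq_mul_inv, mul_inv, inv_inv, div_eq_mul_inv, mul_inv]
        ring
      have hden : ∀ a : Fin r, (1 - RatFunc.C (ι (x' a)) / RatFunc.X⁻¹)
          = φ (lin (ι (x' a))) := by
        intro a
        rw [div_inv_eq_mul, hφlin]
      rw [Finset.prod_congr rfl fun a _ => hnum a, Finset.prod_congr rfl fun a _ => hden a,
        ← map_prod, ← map_prod, ← hPm, ← hPx]
    rw [h0]
    have hsh : (∏ i ∈ Finset.range k,
          (∏ a : Fin r, (1 - RatFunc.C (ι m) * RatFunc.C (ι (x a)) /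
              (zf (i + 1) * (RatFunc.C (ι q₁) * RatFunc.C (ι q₂))))) /
            ∏ a : Fin r, (1 - RatFunc.C (ι (x' a)) / zf (i + 1)))
        = RatFunc.C s3 := by
      rw [hs3, map_prod]
      refine Finset.prod_congr rfl fun i _ => ?_
      rw [hzfs, map_div₀, map_prod, map_prod]
      congr 1
      · refine Finset.prod_congr rfl fun a _ => ?_
        simp [map_sub, map_div₀, map_mul]
      · refine Finset.prod_congr rfl fun a _ => ?_
        simp [map_sub, map_div₀, map_mul]
    rw [hsh]
    ring
  have hU : φ u ≠ 0 := hφne u huev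
  have hA : φ Pa ≠ 0 := hφne Pa hPaev
  have hB : φ Pb ≠ 0 := hφne Pb hPbev
  have hX : φ Px ≠ 0 := hφne Px hPxev
  have key : (φ u)⁻¹ * (φ Pb / φ Pa) * (φ Pm / φ Px) * φ (u * Pa * Px)
      = φ (Pb * Pm) := by
    rw [map_mul, map_mul, map_mul]
    field_simp
  have hC : RatFunc.C ((s1 * s2)⁻¹ * s3)
      = (RatFunc.C s1)⁻¹ * (RatFunc.C s2)⁻¹ * RatFunc.C s3 := by
    rw [map_mul, map_inv₀, map_mul, mul_inv]
  simp only [Ifun, RingHom.comp_apply, Nat.add_sub_cancel]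
  rw [HT1, HT2, HT3, ← hs1, ← hs2, ← hs3, hC]
  simp only [mul_inv, inv_div]
  linear_combination ((RatFunc.C s1)⁻¹ * (RatFunc.C s2)⁻¹ * RatFunc.C s3) * key

/-- The rational function `w ↦ I_n(w⁻¹, z_2, …, z_n)`, regarded as a
rational function in the single variable `w` over the field `F(z_2, …, z_n)`, has no pole
at `w = 0`, and its value at `w = 0` equals `I_{n-1}(z_2, …, z_n)`. -/
theorem stmt_2 {F : Type} [Field F] (r : ℕ) (hr : 1 ≤ r) (q₁ q₂ m : F)
    (x x' : Fin r → F) (hq₁ : q₁ ≠ 0) (hq₂ : q₂ ≠ 0) (hm : m ≠ 0)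
    (hx : ∀ a, x a ≠ 0) (hx' : ∀ a, x' a ≠ 0) (n : ℕ) (hn : 1 ≤ n) :
    -- `K = F(z_2, …, z_n)`, the rational function field in the variables other than `z_1`
    let K := FractionRing (MvPolynomial {j : ℕ // j < n ∧ j ≠ 0} F)
    let ιK : F →+* K :=
      (algebraMap (MvPolynomial {j : ℕ // j < n ∧ j ≠ 0} F) K).comp MvPolynomial.C
    let Z : {j : ℕ // j < n ∧ j ≠ 0} → K := fun s =>
      algebraMap (MvPolynomial {j : ℕ // j < n ∧ j ≠ 0} F) K (MvPolynomial.X s)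
    -- `w ↦ I_n(w⁻¹, z_2, …, z_n)`, a one-variable rational function in `w` over `K`
    let In : RatFunc K := Ifun ((RatFunc.C).comp ιK) q₁ q₂ m r x x' n
      (fun j => if h : j < n ∧ j ≠ 0 then RatFunc.C (Z ⟨j, h⟩) else RatFunc.X⁻¹)
    -- `I_{n-1}(z_2, …, z_n)`, an element of `K`
    let Iprev : K := Ifun ιK q₁ q₂ m r x x' (n - 1)
      (fun j => if h : j + 1 < n ∧ j + 1 ≠ 0 then Z ⟨j + 1, h⟩ else 1)
    -- no pole at `w = 0`, and the value there is `I_{n-1}(z_2, …, z_n)`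
    Polynomial.eval 0 (RatFunc.denom In) ≠ 0 ∧
      Polynomial.eval 0 (RatFunc.num In) / Polynomial.eval 0 (RatFunc.denom In) = Iprev := by
  obtain ⟨k, rfl⟩ : ∃ k, n = k + 1 := ⟨n - 1, by omega⟩
  intro K ιK Z In Iprev
  set w : ℕ → K := fun j => if h : j + 1 < k + 1 ∧ j + 1 ≠ 0 then Z ⟨j + 1, h⟩ else 1 with hw
  have hIprev : Iprev = Ifun ιK q₁ q₂ m r x x' k w := rfl
  obtain ⟨N, D, hN, hD, hmain⟩ := master ιK q₁ q₂ m r x x' k w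
  have hIn : In = Ifun ((RatFunc.C).comp ιK) q₁ q₂ m r x x' (k + 1)
      (fun j => if j = 0 then RatFunc.X⁻¹ else RatFunc.C (w (j - 1))) := by
    refine Ifun_congr _ _ _ _ _ _ _ _ fun j hj => ?_
    match j with
    | 0 => simp
    | (i + 1) =>
      have h1 : i + 1 < k + 1 ∧ i + 1 ≠ 0 := ⟨hj, Nat.succ_ne_zero i⟩
      simp only [dif_pos h1, if_neg (Nat.succ_ne_zero i), Nat.add_sub_cancel, hw]
  have hfq : In * algebraMap (Polynomial K) (RatFunc K) D
      = algebraMap (Polynomial K) (RatFunc K) (Polynomial.C Iprev * N) := by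
    rw [hIn, hmain, map_mul, RatFunc.algebraMap_C, hIprev]
  obtain ⟨h1, h2⟩ := eval0_helper In (Polynomial.C Iprev * N) D
    (by rw [hD]; exact one_ne_zero) hfq
  refine ⟨h1, ?_⟩
  rw [h2, Polynomial.eval_mul, Polynomial.eval_C, hN, hD, mul_one, div_one]
end
end

section
/- With notation as in the context, for every $n \geq 1$: regarded as a rational function in the single variable $z_n$ over the field $F(z_1, \dots, z_{n-1})$, the function $J_n$ has no pole at $z_n = 0$, and its value at $z_n = 0$ equals $\gamma^{-1} \cdot J_{n-1}(z_1, \dots, z_{n-1})$. (This is the residue computation $\mathrm{Res}_{z_n = 0}\, J_n/z_n = \gamma^{-1} J_{n-1}$ from the proof of Lemma 3.3 of the paper.) -/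
/-!
Split off the factors of `J_n` involving `z_n`: `J_n = J_{n-1}(z_1, …, z_{n-1}) ⬝ R(z_n)`. In `R`,
the chain factor `1 - q z_n / z_{n-1}` and the factors `ζ(z_n / z_i)` are polynomials in `z_n`
up to a constant and equal `1` at `z_n = 0`, while
`(1 - x'_a / (z_n q)) / (1 - m x_a / (z_n q)) = (z_n - x'_a / q) / (z_n - m x_a / q)`
has value `x'_a / (m x_a)` there. Values at `0` of rational functions regular at `0` are
multiplicative, so `R(0) = q^r ∏ x'_a / (m^r ∏ x_a) = γ⁻¹`.
-/

open scoped BigOperators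

noncomputable section

/-- The rational expression `J_n` of equation (3.34) of the paper, evaluated at
`z_1 = z 0, …, z_n = z (n-1)`, where `ι : F →+* L` embeds the field of constants.
(By convention `J_0 = 1`, which this definition satisfies as all products are empty.) -/
def Jfun {F L : Type*} [Field F] [Field L] (ι : F →+* L) (q₁ q₂ m : F)
    (r : ℕ) (x x' : Fin r → F) (n : ℕ) (z : ℕ → L) : L :=
  (ι q₁ * ι q₂) ^ (r * n) *
    ((∏ i ∈ Finset.range (n - 1), (1 - ι q₁ * ι q₂ * z (i + 1) / z i)) *
      ∏ i ∈ Finset.range n, ∏ j ∈ Finset.Ico (i + 1) n, zetaF (ι q₁) (ι q₂) (z j / z i))⁻¹ *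
    ∏ i ∈ Finset.range n,
      (∏ a : Fin r, (1 - ι (x' a) / (z i * (ι q₁ * ι q₂)))) /
        ∏ a : Fin r, (1 - ι m * ι (x a) / (z i * (ι q₁ * ι q₂)))

namespace RatFunc

open Polynomial

variable {K : Type*} [Field K]

def HasValueAtZero (f : RatFunc K) (v : K) : Prop :=
  ∃ p q : K[X], q.eval 0 ≠ 0 ∧
    f = algebraMap K[X] (RatFunc K) p / algebraMap K[X] (RatFunc K) q ∧ v = p.eval 0 / q.eval 0

theorem hasValueAtZero_algebraMap (p : K[X]) :
    HasValueAtZero (algebraMap K[X] (RatFunc K) p) (p.eval 0) :=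
  ⟨p, 1, by simp, by simp, by simp⟩

theorem hasValueAtZero_C (c : K) : HasValueAtZero (C c) c := by
  simpa using hasValueAtZero_algebraMap (Polynomial.C c)

theorem HasValueAtZero.mul {f g : RatFunc K} {v w : K} (hf : HasValueAtZero f v)
    (hg : HasValueAtZero g w) : HasValueAtZero (f * g) (v * w) := by
  obtain ⟨p, q, hq, rfl, rfl⟩ := hf
  obtain ⟨p', q', hq', rfl, rfl⟩ := hg
  exact ⟨p * p', q * q', by simp [hq, hq'], by simp [div_mul_div_comm],
    by simp [div_mul_div_comm]⟩

theorem HasValueAtZero.inv {f : RatFunc K} {v : K} (hf : HasValueAtZero f v) (hv : v ≠ 0) :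
    HasValueAtZero f⁻¹ v⁻¹ := by
  obtain ⟨p, q, hq, rfl, rfl⟩ := hf
  exact ⟨q, p, (div_ne_zero_iff.mp hv).1, by rw [inv_div], by rw [inv_div]⟩

theorem HasValueAtZero.div {f g : RatFunc K} {v w : K} (hf : HasValueAtZero f v)
    (hg : HasValueAtZero g w) (hw : w ≠ 0) : HasValueAtZero (f / g) (v / w) := by
  simpa only [div_eq_mul_inv] using hf.mul (hg.inv hw)

theorem hasValueAtZero_prod {ι : Type*} (s : Finset ι) {f : ι → RatFunc K} {v : ι → K}
    (h : ∀ i ∈ s, HasValueAtZero (f i) (v i)) :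
    HasValueAtZero (∏ i ∈ s, f i) (∏ i ∈ s, v i) := by
  classical
  induction s using Finset.induction_on with
  | empty => simpa using hasValueAtZero_C (1 : K)
  | insert i s hi ih =>
    rw [Finset.prod_insert hi, Finset.prod_insert hi]
    exact (h i (s.mem_insert_self i)).mul (ih fun j hj => h j (Finset.mem_insert_of_mem hj))

theorem HasValueAtZero.eval_denom_ne_zero {f : RatFunc K} {v : K} (hf : HasValueAtZero f v) :
    f.denom.eval 0 ≠ 0 := by
  obtain ⟨p, q, hq, rfl, -⟩ := hf
  obtain ⟨t, ht⟩ := denom_div_dvd p q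
  intro h
  exact hq (by rw [ht, Polynomial.eval_mul, h, zero_mul])

theorem HasValueAtZero.eval_num_div_eval_denom {f : RatFunc K} {v : K}
    (hf : HasValueAtZero f v) : f.num.eval 0 / f.denom.eval 0 = v := by
  have hd := hf.eval_denom_ne_zero
  obtain ⟨p, q, hq, hfpq, rfl⟩ := hf
  have hcross : f.num * q = p * f.denom := by
    apply IsFractionRing.injective K[X] (RatFunc K)
    have key := (num_div_denom f).trans hfpq
    rw [div_eq_div_iff (algebraMap_ne_zero f.denom_ne_zero)
      (algebraMap_ne_zero fun h => hq (by simp [h]))] at key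
    simpa only [map_mul] using key
  rw [div_eq_div_iff hd hq, ← Polynomial.eval_mul, ← Polynomial.eval_mul, hcross]

theorem hasValueAtZero_one_sub_X_mul_C (t : K) : HasValueAtZero (1 - X * C t) 1 := by
  convert hasValueAtZero_algebraMap (1 - Polynomial.X * Polynomial.C t) using 1
  · simp only [map_sub, map_one, map_mul, algebraMap_X, algebraMap_C]
  · simp

theorem hasValueAtZero_zetaF (a b s : K) :
    HasValueAtZero (zetaF (C a) (C b) (X * C s)) 1 := by
  have h := hasValueAtZero_one_sub_X_mul_C (K := K)
  simpa [zetaF, mul_assoc, ← map_mul] using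
    ((h (s * a)).mul (h (s * b))).div ((h s).mul (h (s * (a * b)))) (by norm_num)

theorem hasValueAtZero_one_sub_C_div_X_mul_C_div {y w k : K} (hw : w ≠ 0) (hk : k ≠ 0) :
    HasValueAtZero ((1 - C y / (X * C k)) / (1 - C w / (X * C k))) (y / w) := by
  have hX : (X : RatFunc K) ≠ 0 := X_ne_zero
  have hCk : (C k : RatFunc K) ≠ 0 := by simpa using hk
  have hfactor : ∀ u : K, 1 - C u / (X * C k) =
      algebraMap K[X] (RatFunc K) (Polynomial.X - Polynomial.C (u / k)) / X := by
    intro u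
    simp only [map_sub, algebraMap_X, algebraMap_C, map_div₀]
    field_simp
  refine ⟨Polynomial.X - Polynomial.C (y / k), Polynomial.X - Polynomial.C (w / k), ?_, ?_, ?_⟩
  · simp [hw, hk]
  · rw [hfactor, hfactor, div_div_div_cancel_right₀ hX]
  · simp only [Polynomial.eval_sub, Polynomial.eval_X, Polynomial.eval_C, zero_sub,
      neg_div_neg_eq]
    field_simp

end RatFunc

section Jfun

variable {F L : Type*} [Field F] [Field L]

theorem map_zetaF {M : Type*} [Field M] (g : L →+* M) (a b w : L) :
    g (zetaF a b w) = zetaF (g a) (g b) (g w) := by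
  simp [zetaF, map_div₀]

theorem map_Jfun {M : Type*} [Field M] (g : L →+* M) (ι : F →+* L) (q₁ q₂ m : F) (r : ℕ)
    (x x' : Fin r → F) (n : ℕ) (z : ℕ → L) :
    g (Jfun ι q₁ q₂ m r x x' n z) = Jfun (g.comp ι) q₁ q₂ m r x x' n (g ∘ z) := by
  simp [Jfun, map_prod, map_div₀, map_zetaF]

theorem Jfun_congr (ι : F →+* L) (q₁ q₂ m : F) (r : ℕ) (x x' : Fin r → F) {n : ℕ}
    {z w : ℕ → L} (h : ∀ i < n, z i = w i) :
    Jfun ι q₁ q₂ m r x x' n z = Jfun ι q₁ q₂ m r x x' n w := by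
  have hchain : ∏ i ∈ Finset.range (n - 1), (1 - ι q₁ * ι q₂ * z (i + 1) / z i) =
      ∏ i ∈ Finset.range (n - 1), (1 - ι q₁ * ι q₂ * w (i + 1) / w i) :=
    Finset.prod_congr rfl fun i hi => by
      rw [Finset.mem_range] at hi
      rw [h i (by omega), h (i + 1) (by omega)]
  have hzeta : ∏ i ∈ Finset.range n, ∏ j ∈ Finset.Ico (i + 1) n, zetaF (ι q₁) (ι q₂) (z j / z i) =
      ∏ i ∈ Finset.range n, ∏ j ∈ Finset.Ico (i + 1) n, zetaF (ι q₁) (ι q₂) (w j / w i) :=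
    Finset.prod_congr rfl fun i hi => Finset.prod_congr rfl fun j hj => by
      rw [h i (Finset.mem_range.mp hi), h j (Finset.mem_Ico.mp hj).2]
  unfold Jfun
  rw [hchain, hzeta]
  congr 1
  exact Finset.prod_congr rfl fun i hi => by rw [h i (Finset.mem_range.mp hi)]

/-- The factors of `J_{N+1}` involving its last variable `z N`. The chain factor
`1 - q z N / z (N - 1)` is indexed by `Finset.Ico (N - 1) N`, which is empty when `N = 0`. -/
def Jratio (ι : F →+* L) (q₁ q₂ m : F) (r : ℕ) (x x' : Fin r → F) (N : ℕ) (z : ℕ → L) : L :=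
  (ι q₁ * ι q₂) ^ r *
    ((∏ i ∈ Finset.Ico (N - 1) N, (1 - ι q₁ * ι q₂ * z (i + 1) / z i)) *
      ∏ i ∈ Finset.range N, zetaF (ι q₁) (ι q₂) (z N / z i))⁻¹ *
    ((∏ a : Fin r, (1 - ι (x' a) / (z N * (ι q₁ * ι q₂)))) /
      ∏ a : Fin r, (1 - ι m * ι (x a) / (z N * (ι q₁ * ι q₂))))

theorem Jfun_succ (ι : F →+* L) (q₁ q₂ m : F) (r : ℕ) (x x' : Fin r → F) (N : ℕ)
    (z : ℕ → L) :
    Jfun ι q₁ q₂ m r x x' (N + 1) z =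
      Jfun ι q₁ q₂ m r x x' N z * Jratio ι q₁ q₂ m r x x' N z := by
  have hzeta : ∀ f : ℕ → ℕ → L, ∏ i ∈ Finset.range (N + 1), ∏ j ∈ Finset.Ico (i + 1) (N + 1),
      f i j = (∏ i ∈ Finset.range N, ∏ j ∈ Finset.Ico (i + 1) N, f i j) *
        ∏ i ∈ Finset.range N, f i N := by
    intro f
    rw [Finset.prod_range_succ, Finset.Ico_self, Finset.prod_empty, mul_one,
      ← Finset.prod_mul_distrib]
    exact Finset.prod_congr rfl fun i hi => Finset.prod_Ico_succ_top (Finset.mem_range.mp hi) _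
  unfold Jfun Jratio
  rw [Nat.add_sub_cancel, ← Finset.prod_range_mul_prod_Ico _ (Nat.sub_le N 1), hzeta,
    Finset.prod_range_succ _ N, mul_add_one, pow_add]
  ring

end Jfun

open RatFunc in
theorem hasValueAtZero_Jratio {F K : Type*} [Field F] [Field K] (ι : F →+* K) {q₁ q₂ m : F}
    {r : ℕ} {x x' : Fin r → F} (hq₁ : q₁ ≠ 0) (hq₂ : q₂ ≠ 0) (hm : m ≠ 0)
    (hx : ∀ a, x a ≠ 0) {N : ℕ} {z : ℕ → RatFunc K} {c : ℕ → K}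
    (hz : ∀ i < N, z i = C (c i)) (hzN : z N = X) :
    HasValueAtZero (Jratio (C.comp ι) q₁ q₂ m r x x' N z)
      (ι ((m ^ r * ∏ a, x a) / ((q₁ * q₂) ^ r * ∏ a, x' a)))⁻¹ := by
  set k := ι q₁ * ι q₂ with hk_def
  have hk : k ≠ 0 := mul_ne_zero (by simpa using hq₁) (by simpa using hq₂)
  have hchain : ∀ i ∈ Finset.Ico (N - 1) N,
      HasValueAtZero (1 - C (ι q₁) * C (ι q₂) * z (i + 1) / z i) 1 := by
    intro i hi
    obtain ⟨hi₁, hi₂⟩ := Finset.mem_Ico.mp hi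
    rw [show i + 1 = N by omega, hzN, hz i hi₂]
    convert hasValueAtZero_one_sub_X_mul_C (k / c i) using 2
    simp only [hk_def, map_div₀, map_mul]
    ring
  have hzeta : ∀ i ∈ Finset.range N,
      HasValueAtZero (zetaF (C (ι q₁)) (C (ι q₂)) (z N / z i)) 1 := by
    intro i hi
    rw [hzN, hz i (Finset.mem_range.mp hi), div_eq_mul_inv, ← map_inv₀]
    exact hasValueAtZero_zetaF _ _ _
  have hlast : ∀ a ∈ Finset.univ,
      HasValueAtZero ((1 - C (ι (x' a)) / (X * C k)) / (1 - C (ι m * ι (x a)) / (X * C k)))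
        (ι (x' a) / (ι m * ι (x a))) :=
    fun a _ => hasValueAtZero_one_sub_C_div_X_mul_C_div
      (mul_ne_zero (by simpa using hm) (by simpa using hx a)) hk
  have h := ((hasValueAtZero_C (k ^ r)).mul
    (((hasValueAtZero_prod _ hchain).mul (hasValueAtZero_prod _ hzeta)).inv (by simp))).mul
    (hasValueAtZero_prod _ hlast)
  convert h using 1
  · simp only [Jratio, RingHom.comp_apply, hzN, ← Finset.prod_div_distrib, map_pow, map_mul,
      hk_def]
  · simp only [mul_pow, map_div₀, map_mul, map_pow, map_prod, inv_div, hk_def,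
      Finset.prod_const_one, mul_one, inv_one, Finset.prod_div_distrib, Finset.prod_mul_distrib,
      Finset.prod_const, Finset.card_univ, Fintype.card_fin]
    ring

theorem stmt_4_general {F : Type} [Field F] (r : ℕ) (q₁ q₂ m : F)
    (x x' : Fin r → F) (hq₁ : q₁ ≠ 0) (hq₂ : q₂ ≠ 0) (hm : m ≠ 0)
    (hx : ∀ a, x a ≠ 0) (n : ℕ) (hn : 1 ≤ n) :
    -- `K = F(z_1, …, z_{n-1})`, the rational function field in the variables other than `z_n`
    let K := FractionRing (MvPolynomial {j : ℕ // j < n ∧ j ≠ n - 1} F)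
    let ιK : F →+* K :=
      (algebraMap (MvPolynomial {j : ℕ // j < n ∧ j ≠ n - 1} F) K).comp MvPolynomial.C
    let Z : {j : ℕ // j < n ∧ j ≠ n - 1} → K := fun s =>
      algebraMap (MvPolynomial {j : ℕ // j < n ∧ j ≠ n - 1} F) K (MvPolynomial.X s)
    -- `J_n`, regarded as a one-variable rational function in `z_n` over `K`
    let Jn : RatFunc K := Jfun ((RatFunc.C).comp ιK) q₁ q₂ m r x x' n
      (fun j => if h : j < n ∧ j ≠ n - 1 then RatFunc.C (Z ⟨j, h⟩) else RatFunc.X)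
    -- `J_{n-1}(z_1, …, z_{n-1})`, an element of `K`
    let Jprev : K := Jfun ιK q₁ q₂ m r x x' (n - 1)
      (fun j => if h : j < n ∧ j ≠ n - 1 then Z ⟨j, h⟩ else 1)
    -- no pole at `z_n = 0`, and the value there is `γ⁻¹ ⬝ J_{n-1}`
    Polynomial.eval 0 (RatFunc.denom Jn) ≠ 0 ∧
      Polynomial.eval 0 (RatFunc.num Jn) / Polynomial.eval 0 (RatFunc.denom Jn) =
        (ιK ((m ^ r * ∏ a : Fin r, x a) / ((q₁ * q₂) ^ r * ∏ a : Fin r, x' a)))⁻¹ * Jprev := by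
  obtain ⟨N, rfl⟩ : ∃ N, n = N + 1 := ⟨n - 1, by omega⟩
  intro K ιK Z Jn Jprev
  set c : ℕ → K := fun j => if h : j < N + 1 ∧ j ≠ N + 1 - 1 then Z ⟨j, h⟩ else 1
  set z : ℕ → RatFunc K :=
    fun j => if h : j < N + 1 ∧ j ≠ N + 1 - 1 then RatFunc.C (Z ⟨j, h⟩) else RatFunc.X
  have hz : ∀ i < N, z i = RatFunc.C (c i) := fun i hi => by
    simp only [z, c, dif_pos (show i < N + 1 ∧ i ≠ N + 1 - 1 by omega)]
  have hzN : z N = RatFunc.X := by simp [z]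
  have hJn : Jn = RatFunc.C Jprev * Jratio (RatFunc.C.comp ιK) q₁ q₂ m r x x' N z := by
    rw [show Jn = Jfun (RatFunc.C.comp ιK) q₁ q₂ m r x x' (N + 1) z from rfl,
      show Jprev = Jfun ιK q₁ q₂ m r x x' N c from rfl, Jfun_succ,
      Jfun_congr _ _ _ _ _ _ _ hz, map_Jfun]
    rfl
  have h := hJn ▸ (RatFunc.hasValueAtZero_C Jprev).mul
    (hasValueAtZero_Jratio ιK (x' := x') hq₁ hq₂ hm hx hz hzN)
  rw [mul_comm]
  exact ⟨h.eval_denom_ne_zero, h.eval_num_div_eval_denom⟩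

/-- Regarded as a rational function in the single variable `z_n` over the
field `F(z_1, …, z_{n-1})`, the function `J_n` has no pole at `z_n = 0`, and its value at
`z_n = 0` equals `γ⁻¹ ⬝ J_{n-1}(z_1, …, z_{n-1})`, where
`γ = m^r ∏ x_a / (q^r ∏ x'_a)`. -/
theorem stmt_4 {F : Type} [Field F] (r : ℕ) (hr : 1 ≤ r) (q₁ q₂ m : F)
    (x x' : Fin r → F) (hq₁ : q₁ ≠ 0) (hq₂ : q₂ ≠ 0) (hm : m ≠ 0)
    (hx : ∀ a, x a ≠ 0) (hx' : ∀ a, x' a ≠ 0) (n : ℕ) (hn : 1 ≤ n) :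
    -- `K = F(z_1, …, z_{n-1})`, the rational function field in the variables other than `z_n`
    let K := FractionRing (MvPolynomial {j : ℕ // j < n ∧ j ≠ n - 1} F)
    let ιK : F →+* K :=
      (algebraMap (MvPolynomial {j : ℕ // j < n ∧ j ≠ n - 1} F) K).comp MvPolynomial.C
    let Z : {j : ℕ // j < n ∧ j ≠ n - 1} → K := fun s =>
      algebraMap (MvPolynomial {j : ℕ // j < n ∧ j ≠ n - 1} F) K (MvPolynomial.X s)
    -- `J_n`, regarded as a one-variable rational function in `z_n` over `K`
    let Jn : RatFunc K := Jfun ((RatFunc.C).comp ιK) q₁ q₂ m r x x' n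
      (fun j => if h : j < n ∧ j ≠ n - 1 then RatFunc.C (Z ⟨j, h⟩) else RatFunc.X)
    -- `J_{n-1}(z_1, …, z_{n-1})`, an element of `K`
    let Jprev : K := Jfun ιK q₁ q₂ m r x x' (n - 1)
      (fun j => if h : j < n ∧ j ≠ n - 1 then Z ⟨j, h⟩ else 1)
    -- no pole at `z_n = 0`, and the value there is `γ⁻¹ ⬝ J_{n-1}`
    Polynomial.eval 0 (RatFunc.denom Jn) ≠ 0 ∧
      Polynomial.eval 0 (RatFunc.num Jn) / Polynomial.eval 0 (RatFunc.denom Jn) =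
        (ιK ((m ^ r * ∏ a : Fin r, x a) / ((q₁ * q₂) ^ r * ∏ a : Fin r, x' a)))⁻¹ * Jprev :=
  stmt_4_general r q₁ q₂ m x x' hq₁ hq₂ hm hx n hn
end
end

section
/- Let $R$ be an associative unital $\mathbb{Q}$-algebra, let $A \in R$, let $\gamma \in R$ be a central element, and let $(P_n)_{n \geq 1}$ be a sequence of elements of $R$. Define elements $H_n \in R$ for $n \geq 0$ by the formal power series identity $\sum_{n \geq 0} H_n z^n = \exp\big(\sum_{n \geq 1} P_n z^n / n\big)$ in $R[[z]]$ (so $H_0 = 1$), and set $H_{-1} = 0$. If $A (H_n - H_{n-1}) = \gamma^n (H_n - H_{n-1}) A$ for all $n \geq 0$, then $A P_n - \gamma^n P_n A = A (1 - \gamma^n)$ for all $n \geq 1$. -/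
open scoped BigOperators

/-- The exponential `exp(X) = ∑_{k ≥ 0} X^k / k!` of a formal power series `X` with zero
constant term, over a (possibly noncommutative) `ℚ`-algebra `R`. -/
noncomputable def expPS {R : Type*} [Ring R] [Algebra ℚ R] (X : PowerSeries R) :
    PowerSeries R :=
  PowerSeries.mk fun n =>
    ∑ k ∈ Finset.range (n + 1), (k.factorial : ℚ)⁻¹ • PowerSeries.coeff n (X ^ k)

/-!
Put `L = ∑_{n ≥ 1} P_n zⁿ / n`. The hypothesis says that `A` twisted-commutes with the
coefficients of `(1 - z) exp L = exp (log (1 - z) + L)`, in the sense `A f_n = γⁿ f_n A`.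
The series with this property form a `ℚ`-subalgebra, and the coefficient of `zⁿ` in `exp F` is
`f_n` plus a polynomial in `f_1, …, f_{n-1}`; so by induction on `n`, `A` twisted-commutes with
the coefficients `(P_n - 1) / n` of `log (1 - z) + L`.
The addition formula for `exp` is the one for nilpotent elements, applied modulo `z ^ N`, and
`exp (log (1 - z)) = 1 - z` follows from the differential equation `(1 - z) E' = -E`.
-/

open PowerSeries Finset

theorem PowerSeries.coeff_pow_eq_zero_of_lt {R : Type*} [Semiring R] {F : R⟦X⟧}
    (hF : constantCoeff F = 0) {n k : ℕ} (h : n < k) : coeff n (F ^ k) = 0 :=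
  coeff_of_lt_order n <| (Nat.cast_lt.mpr h).trans_le (le_order_pow_of_constantCoeff_eq_zero k hF)

theorem PowerSeries.commute_of_coeff_commute {R : Type*} [Semiring R] {F G : R⟦X⟧}
    (h : ∀ i j, Commute (coeff i F) (coeff j G)) : Commute F G := by
  ext n
  rw [coeff_mul, coeff_mul, ← Nat.sum_antidiagonal_swap]
  exact sum_congr rfl fun p _ => (h p.2 p.1).eq

theorem PowerSeries.coeff_one_sub_X_mul {R : Type*} [Ring R] (F : R⟦X⟧) (n : ℕ) :
    coeff n ((1 - X) * F) = coeff n F - if n = 0 then 0 else coeff (n - 1) F := by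
  cases n <;> simp [sub_mul, coeff_succ_X_mul]

def PowerSeries.modXPow (R : Type*) [Semiring R] (N : ℕ) : RingCon R⟦X⟧ where
  r F G := ∀ m < N, coeff m F = coeff m G
  iseqv := ⟨fun _ _ _ => rfl, fun h m hm => (h m hm).symm,
    fun h h' m hm => (h m hm).trans (h' m hm)⟩
  add' h h' m hm := by simp only [map_add, h m hm, h' m hm]
  mul' h h' m hm := by
    simp only [coeff_mul]
    refine sum_congr rfl fun p hp => ?_
    rw [h p.1 ((HasAntidiagonal.antidiagonal.fst_le hp).trans_lt hm),
      h' p.2 ((HasAntidiagonal.antidiagonal.snd_le hp).trans_lt hm)]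

section Exp

variable {R : Type*} [Ring R] [Algebra ℚ R]

theorem coeff_expPS_eq_sum_range {F : R⟦X⟧} (hF : constantCoeff F = 0) {n N : ℕ} (h : n < N) :
    coeff n (expPS F) = ∑ k ∈ range N, (k.factorial : ℚ)⁻¹ • coeff n (F ^ k) := by
  rw [expPS, coeff_mk]
  refine sum_subset (range_subset_range.mpr h) fun k _ hk => ?_
  rw [coeff_pow_eq_zero_of_lt hF (by simpa using hk), smul_zero]

theorem modXPow_pow_eq_zero {F : R⟦X⟧} (hF : constantCoeff F = 0) (N : ℕ) :
    (modXPow R N).mkₐ ℚ F ^ N = 0 := by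
  rw [← map_pow, ← map_zero ((modXPow R N).mkₐ ℚ)]
  exact (RingCon.eq _).mpr fun m hm => by rw [coeff_pow_eq_zero_of_lt hF hm, map_zero]

theorem modXPow_expPS {F : R⟦X⟧} (hF : constantCoeff F = 0) (N : ℕ) :
    (modXPow R N).mkₐ ℚ (expPS F) = IsNilpotent.exp ((modXPow R N).mkₐ ℚ F) := by
  rw [IsNilpotent.exp_eq_sum (modXPow_pow_eq_zero hF N)]
  simp only [← map_pow, ← map_smul, ← map_sum]
  refine (RingCon.eq _).mpr fun m hm => ?_
  rw [coeff_expPS_eq_sum_range hF hm, map_sum]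
  simp only [map_rat_smul]

theorem expPS_add_of_commute {F G : R⟦X⟧} (hFG : Commute F G) (hF : constantCoeff F = 0)
    (hG : constantCoeff G = 0) : expPS (F + G) = expPS F * expPS G := by
  ext n
  set π := (modXPow R (n + 1)).mkₐ ℚ
  have hπ : π (expPS (F + G)) = π (expPS F * expPS G) := by
    rw [map_mul, modXPow_expPS hF, modXPow_expPS hG, modXPow_expPS (by simp [hF, hG]), map_add,
      IsNilpotent.exp_add_of_commute (hFG.map π) ⟨_, modXPow_pow_eq_zero hF _⟩
        ⟨_, modXPow_pow_eq_zero hG _⟩]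
  exact (RingCon.eq _).mp hπ n n.lt_succ_self

end Exp

theorem twistedCommute_mul {R : Type*} [Ring R] {a c : R} (hc : ∀ r, Commute c r) {x y : R}
    {i j : ℕ} (hx : a * x = c ^ i * x * a) (hy : a * y = c ^ j * y * a) :
    a * (x * y) = c ^ (i + j) * (x * y) * a := by
  rw [← mul_assoc, hx, mul_assoc _ a, hy, pow_add]
  simp only [mul_assoc]
  rw [← mul_assoc x, ← ((hc x).pow_left j).eq]
  simp only [mul_assoc]

section TwistedCentralizer

variable {R : Type*} [Ring R] [Algebra ℚ R] {c : R} (hc : ∀ r, Commute c r)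

/-- The series `F` with `a * F(z) = F(c z) * a` modulo `z ^ N`. -/
def twistedCentralizer (a : R) (N : ℕ) : Subalgebra ℚ R⟦X⟧ where
  carrier := {F | ∀ m < N, a * coeff m F = c ^ m * coeff m F * a}
  mul_mem' {F G} hF hG m hm := by
    simp only [coeff_mul, mul_sum, sum_mul]
    refine sum_congr rfl fun p hp => ?_
    rw [← HasAntidiagonal.mem_antidiagonal.mp hp]
    exact twistedCommute_mul hc (hF _ ((HasAntidiagonal.antidiagonal.fst_le hp).trans_lt hm))
      (hG _ ((HasAntidiagonal.antidiagonal.snd_le hp).trans_lt hm))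
  add_mem' {F G} hF hG m hm := by simp only [map_add, mul_add, add_mul, hF m hm, hG m hm]
  algebraMap_mem' q m _ := by
    rw [PowerSeries.algebraMap_apply, coeff_C]
    split_ifs with hm
    · simp [hm, Algebra.commutes]
    · simp

variable {hc} {a : R} {N : ℕ}

theorem mul_mem_twistedCentralizer_succ {F G : R⟦X⟧} (hF : F ∈ twistedCentralizer hc a N)
    (hG : G ∈ twistedCentralizer hc a N) (hF0 : constantCoeff F = 0)
    (hG0 : constantCoeff G = 0) : F * G ∈ twistedCentralizer hc a (N + 1) := by
  intro m hm
  rcases (Nat.lt_succ_iff.mp hm).lt_or_eq with hm | rfl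
  · exact Subalgebra.mul_mem _ hF hG m hm
  simp only [coeff_mul, mul_sum, sum_mul]
  refine sum_congr rfl fun ⟨i, j⟩ hij => ?_
  rw [HasAntidiagonal.mem_antidiagonal] at hij
  subst hij
  rcases Nat.eq_zero_or_pos i with rfl | hi
  · simp [hF0]
  rcases Nat.eq_zero_or_pos j with rfl | hj
  · simp [hG0]
  exact twistedCommute_mul hc (hF i (by omega)) (hG j (by omega))

theorem coeff_expPS_eq_coeff_add {F : R⟦X⟧} (hF : constantCoeff F = 0) (N : ℕ) :
    coeff N (expPS F) = coeff N F +
      coeff N (1 + ∑ k ∈ range N, ((k + 2).factorial : ℚ)⁻¹ • F ^ (k + 2)) := by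
  rw [coeff_expPS_eq_sum_range hF (by omega : N < N + 1 + 1), sum_range_succ', sum_range_succ']
  simp [map_sum, add_comm, add_left_comm]

theorem mem_twistedCentralizer_of_expPS_mem {F : R⟦X⟧} (hF : constantCoeff F = 0) :
    ∀ {N : ℕ}, expPS F ∈ twistedCentralizer hc a N → F ∈ twistedCentralizer hc a N
  | 0, _ => fun _ h => absurd h (Nat.not_lt_zero _)
  | N + 1, hexp => by
    have hN : F ∈ twistedCentralizer hc a N :=
      mem_twistedCentralizer_of_expPS_mem hF fun m hm => hexp m (hm.trans N.lt_succ_self)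
    have hrest : (1 + ∑ k ∈ range N, ((k + 2).factorial : ℚ)⁻¹ • F ^ (k + 2)) ∈
        twistedCentralizer hc a (N + 1) := by
      refine add_mem (one_mem _) (sum_mem fun k _ => Subalgebra.smul_mem _ ?_ _)
      rw [pow_succ']
      exact mul_mem_twistedCentralizer_succ hN (pow_mem hN _) hF (by simp [hF])
    intro m hm
    rcases (Nat.lt_succ_iff.mp hm).lt_or_eq with hm | rfl
    · exact hN m hm
    have := sub_mem hexp hrest m hm
    rwa [map_sub, coeff_expPS_eq_coeff_add hF, add_sub_cancel_right] at this

end TwistedCentralizer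

theorem expPS_eq_subst_exp {S : Type*} [CommRing S] [Algebra ℚ S] {F : S⟦X⟧}
    (hF : constantCoeff F = 0) : expPS F = (exp S).subst F := by
  ext n
  rw [coeff_subst' (HasSubst.of_constantCoeff_zero' hF), finsum_eq_sum_of_support_subset
    (s := range (n + 1)), expPS, coeff_mk]
  · simp [coeff_exp, Algebra.smul_def]
  · refine Function.support_subset_iff'.mpr fun k hk => ?_
    rw [coeff_pow_eq_zero_of_lt hF (by simpa using hk), smul_zero]

theorem eq_zero_of_one_sub_X_mul_derivative_eq_neg {f : ℚ⟦X⟧}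
    (hf : (1 - X) * d⁄dX ℚ f = -f) (hf0 : constantCoeff f = 0) : f = 0 := by
  ext n
  induction n with
  | zero => simpa using hf0
  | succ n ih =>
    rw [map_zero] at ih ⊢
    have hprev : (if n = 0 then 0 else coeff (n - 1) (d⁄dX ℚ f)) = 0 := by
      split_ifs with hn
      · rfl
      · rw [coeff_derivative, Nat.sub_add_cancel (Nat.pos_of_ne_zero hn), ih, zero_mul]
    have hn := congr_arg (coeff n) hf
    rw [coeff_one_sub_X_mul, hprev, sub_zero, coeff_derivative, map_neg, ih, neg_zero] at hn
    exact (mul_eq_zero.mp hn).resolve_right (Nat.cast_add_one_ne_zero n)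

theorem map_expPS {S R : Type*} [Ring S] [Algebra ℚ S] [Ring R] [Algebra ℚ R] (φ : S →+* R)
    (F : S⟦X⟧) : map φ (expPS F) = expPS (map φ F) := by
  ext n
  simp only [expPS, coeff_map, coeff_mk, map_sum, map_rat_smul, ← map_pow]

/-- `log (1 - X) = -∑ Xⁿ / n`; its constant coefficient is `-0⁻¹ = 0`. -/
noncomputable def logOneSub (R : Type*) [Ring R] [Algebra ℚ R] : R⟦X⟧ :=
  mk fun n => algebraMap ℚ R (-(n : ℚ)⁻¹)

theorem constantCoeff_logOneSub (R : Type*) [Ring R] [Algebra ℚ R] :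
    constantCoeff (logOneSub R) = 0 := by
  simp [← coeff_zero_eq_constantCoeff_apply, logOneSub]

theorem commute_logOneSub {R : Type*} [Ring R] [Algebra ℚ R] (F : R⟦X⟧) :
    Commute (logOneSub R) F :=
  commute_of_coeff_commute fun _ _ => by rw [logOneSub, coeff_mk]; exact Algebra.commutes _ _

theorem one_sub_X_mul_derivative_logOneSub : (1 - X) * d⁄dX ℚ (logOneSub ℚ) = -1 := by
  ext n
  have hd : ∀ m : ℕ, coeff m (d⁄dX ℚ (logOneSub ℚ)) = -1 := fun m => by
    rw [coeff_derivative, logOneSub, coeff_mk, Algebra.algebraMap_self, RingHom.id_apply]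
    field_simp
    push_cast
    ring
  rw [coeff_one_sub_X_mul, hd, hd, map_neg, coeff_one]
  split_ifs <;> ring

theorem expPS_logOneSub_rat : expPS (logOneSub ℚ) = 1 - X := by
  have h0 := constantCoeff_logOneSub ℚ
  have hE : (1 - X) * d⁄dX ℚ (expPS (logOneSub ℚ)) = -expPS (logOneSub ℚ) := by
    rw [expPS_eq_subst_exp h0, derivative_subst (HasSubst.of_constantCoeff_zero' h0),
      derivative_exp, mul_left_comm, one_sub_X_mul_derivative_logOneSub, mul_neg_one]
  rw [← sub_eq_zero]
  refine eq_zero_of_one_sub_X_mul_derivative_eq_neg ?_ ?_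
  · rw [map_sub, mul_sub, hE, map_sub, Derivation.map_one_eq_zero, derivative_X]
    ring
  · rw [← coeff_zero_eq_constantCoeff_apply, map_sub, map_sub, expPS, coeff_mk]
    simp

theorem expPS_logOneSub (R : Type*) [Ring R] [Algebra ℚ R] : expPS (logOneSub R) = 1 - X := by
  have h := congr_arg (map (algebraMap ℚ R)) expPS_logOneSub_rat
  rwa [map_expPS, map_sub, map_one, map_X, (by ext; simp [logOneSub] :
    map (algebraMap ℚ R) (logOneSub ℚ) = logOneSub R)] at h

/-- Let `R` be an associative unital `ℚ`-algebra, `A ∈ R`, `γ ∈ R`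
central, and `(P_n)_{n ≥ 1}` a sequence in `R`.  Define `H_n` for `n ≥ 0` by
`∑_{n ≥ 0} H_n z^n = exp(∑_{n ≥ 1} P_n z^n / n)` (so `H_0 = 1`), and set `H_{-1} = 0`.
If `A (H_n - H_{n-1}) = γ^n (H_n - H_{n-1}) A` for all `n ≥ 0`, then
`A P_n - γ^n P_n A = A (1 - γ^n)` for all `n ≥ 1`. -/
theorem stmt_8 {R : Type*} [Ring R] [Algebra ℚ R] (A γ : R)
    (hγ : ∀ x : R, γ * x = x * γ) (P H : ℕ → R)
    (hH : (PowerSeries.mk H : PowerSeries R) =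
      expPS (PowerSeries.mk fun n => if n = 0 then 0 else (n : ℚ)⁻¹ • P n))
    (hA : ∀ n : ℕ, A * (H n - if n = 0 then 0 else H (n - 1)) =
      γ ^ n * ((H n - if n = 0 then 0 else H (n - 1)) * A)) :
    ∀ n : ℕ, 1 ≤ n → A * P n - γ ^ n * (P n * A) = A * (1 - γ ^ n) := by
  set L : R⟦X⟧ := mk fun n => if n = 0 then 0 else (n : ℚ)⁻¹ • P n
  have hL0 : constantCoeff L = 0 := by simp [L, ← coeff_zero_eq_constantCoeff_apply]
  have hexp : expPS (logOneSub R + L) = (1 - X) * PowerSeries.mk H := by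
    rw [expPS_add_of_commute (commute_logOneSub L) (constantCoeff_logOneSub R) hL0,
      expPS_logOneSub, hH]
  intro n hn
  have hn0 : (n : ℚ) ≠ 0 := by positivity
  have key : A * coeff n (logOneSub R + L) = γ ^ n * coeff n (logOneSub R + L) * A := by
    refine mem_twistedCentralizer_of_expPS_mem (hc := hγ)
      (by simp [constantCoeff_logOneSub, hL0]) (fun m _ => ?_) n n.lt_succ_self
    rw [hexp, coeff_one_sub_X_mul, coeff_mk, coeff_mk, hA, mul_assoc]
  have hcoeff : coeff n (logOneSub R + L) = (n : ℚ)⁻¹ • (P n - 1) := by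
    simp only [logOneSub, L, map_add, coeff_mk, Nat.pos_iff_ne_zero.mp hn, ↓reduceIte,
      Algebra.algebraMap_eq_smul_one, neg_smul, smul_sub]
    abel
  rw [hcoeff, mul_smul_comm, mul_smul_comm, smul_mul_assoc] at key
  have h := smul_right_injective R (inv_ne_zero hn0) key
  simp only [mul_sub, sub_mul, mul_one] at h
  have hγA : γ ^ n * A = A * γ ^ n := ((show Commute γ A from hγ A).pow_left n).eq
  calc A * P n - γ ^ n * (P n * A) = (A * P n - A) - γ ^ n * (P n * A) + A := by abel
    _ = A * (1 - γ ^ n) := by rw [h, mul_sub, mul_one, hγA, mul_assoc]; abel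
end

section
/- Let $R$ be an associative unital $\mathbb{Q}$-algebra, let $A \in R$, let $\gamma \in R$ be a central unit and $t \in R$ a central element, and let $(P_n)_{n \geq 1}$ be a sequence of elements of $R$. Define elements $H_n \in R$ for $n \geq 0$ by the formal power series identity $\sum_{n \geq 0} H_n z^n = \exp\big(\sum_{n \geq 1} P_n z^n / n\big)$ in $R[[z]]$ (so $H_0 = 1$), and set $H_{-1} = 0$. If $A (H_n - \gamma^{-1} H_{n-1}) = (\gamma^{-n} H_n - t\, \gamma^{-n+1} H_{n-1}) A$ for all $n \geq 0$, then $A P_n - \gamma^{-n} P_n A = A(\gamma^{-n} - t^n)$ for all $n \geq 1$. -/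
/-!
Put `F = ∑ P_n z^n / n`, so that `H = exp F`. The hypothesis is the coefficientwise form of
`A (1 - γ'z) H(z) = (1 - tz) H(γ'z) A`. For central `c` the geometric series `∑ c^n z^n`
inverts `1 - cz` and equals `exp (∑ c^n z^n / n)`, so dividing by `(1 - γ'z)(1 - tz)` gives
`A exp(L_t + F(z)) = exp(L_γ' + F(γ'z)) A` with `L_c = ∑ c^n z^n / n`. An intertwining
`A exp f = exp g A` of series without constant term forces `A f = g A` (compare coefficients
by induction: `f^k` for `k ≥ 2` only sees lower coefficients of `f`), and the coefficient of
`z^n` in `A (L_t + F) = (L_γ' + F(γ'z)) A` is the claim.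

The identity `exp (f + g) = exp f exp g` for commuting `f, g` is checked modulo every `X^N`,
where series without constant term are nilpotent, and `exp (∑ z^n / n) = ∑ z^n` over `ℚ`
follows from `(exp f)' = exp f · f'`.
-/

open scoped BigOperators

namespace PowerSeries

open Finset
open scoped Nat

section Ring

variable {R : Type*} [Ring R]

theorem coeff_pow_eq_zero_of_lt_s9 {f : R⟦X⟧} (hf : constantCoeff f = 0) {n k : ℕ} (h : n < k) :
    coeff n (f ^ k) = 0 :=
  coeff_of_lt_order n ((Nat.cast_lt.2 h).trans_le (le_order_pow_of_constantCoeff_eq_zero k hf))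

theorem commute_of_forall_coeff_commute {f : R⟦X⟧} (hf : ∀ n x, Commute (coeff n f) x)
    (g : R⟦X⟧) : Commute f g := by
  ext n
  rw [coeff_mul, coeff_mul, ← Nat.sum_antidiagonal_swap]
  exact sum_congr rfl fun p _ => (hf p.2 _).eq

variable (R) in
def modXPowCon (N : ℕ) : RingCon R⟦X⟧ where
  r f g := ∀ m < N, coeff m f = coeff m g
  iseqv := ⟨fun _ _ _ => rfl, fun h m hm => (h m hm).symm,
    fun h₁ h₂ m hm => (h₁ m hm).trans (h₂ m hm)⟩
  add' h₁ h₂ m hm := by rw [map_add, map_add, h₁ m hm, h₂ m hm]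
  mul' h₁ h₂ m hm := by
    simp only [coeff_mul]
    refine sum_congr rfl fun p hp => ?_
    rw [HasAntidiagonal.mem_antidiagonal] at hp
    rw [h₁ p.1 (by omega), h₂ p.2 (by omega)]

theorem eq_of_forall_modXPowCon {f g : R⟦X⟧} (h : ∀ N, modXPowCon R N f g) : f = g :=
  ext fun n => h (n + 1) n n.lt_succ_self

theorem pow_mk_modXPowCon_eq_zero {f : R⟦X⟧} (hf : constantCoeff f = 0) (N : ℕ) :
    (f : (modXPowCon R N).Quotient) ^ N = 0 := by
  rw [← RingCon.coe_pow, ← RingCon.coe_zero, RingCon.eq]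
  intro m hm
  rw [coeff_pow_eq_zero_of_lt_s9 hf hm, map_zero]

-- The coefficient of `X^b` in `f^k` only involves coefficients of `f` of index `≤ b + 1 - k`.
theorem intertwine_coeff_pow {a : R} {f g : R⟦X⟧} (hf : constantCoeff f = 0)
    (hg : constantCoeff g = 0) {n : ℕ} (h : ∀ m < n, a * coeff m f = coeff m g * a) :
    ∀ k b, b + 1 < n + k → a * coeff b (f ^ k) = coeff b (g ^ k) * a := by
  intro k
  induction k with
  | zero =>
    intro b _
    rw [pow_zero, pow_zero, coeff_one]
    split_ifs <;> simp
  | succ k ih =>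
    intro b hb
    rw [pow_succ', pow_succ', coeff_mul, coeff_mul, mul_sum, sum_mul]
    refine sum_congr rfl fun ⟨i, j⟩ hij => ?_
    rw [HasAntidiagonal.mem_antidiagonal] at hij
    obtain rfl | hi := Nat.eq_zero_or_pos i
    · simp [hf, hg]
    by_cases hin : i < n
    · rw [← mul_assoc, h i hin, mul_assoc, ih j (by omega), mul_assoc]
    · rw [coeff_pow_eq_zero_of_lt_s9 hf (by omega : j < k), coeff_pow_eq_zero_of_lt_s9 hg (by omega),
        mul_zero, mul_zero, mul_zero, zero_mul]

end Ring

section Exp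

variable {R : Type*} [Ring R] [Algebra ℚ R]

@[simp]
theorem constantCoeff_expPS (f : R⟦X⟧) : constantCoeff (expPS f) = 1 := by
  rw [← coeff_zero_eq_constantCoeff_apply, expPS, coeff_mk]
  simp

theorem coeff_expPS_eq_sum_range {f : R⟦X⟧} (hf : constantCoeff f = 0) {n N : ℕ} (h : n < N) :
    coeff n (expPS f) = ∑ k ∈ range N, (k ! : ℚ)⁻¹ • coeff n (f ^ k) := by
  rw [expPS, coeff_mk]
  refine sum_subset (range_subset_range.2 h) fun k _ hk => ?_
  rw [coeff_pow_eq_zero_of_lt_s9 hf (by simpa using hk), smul_zero]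

theorem modXPowCon_expPS {f : R⟦X⟧} (hf : constantCoeff f = 0) (N : ℕ) :
    modXPowCon R N (expPS f) (∑ k ∈ range N, (k ! : ℚ)⁻¹ • f ^ k) := fun m hm => by
  simp [coeff_expPS_eq_sum_range hf hm, map_sum]

theorem coe_expPS_modXPowCon {f : R⟦X⟧} (hf : constantCoeff f = 0) (N : ℕ) :
    ((expPS f : R⟦X⟧) : (modXPowCon R N).Quotient) =
      IsNilpotent.exp (f : (modXPowCon R N).Quotient) := by
  rw [IsNilpotent.exp_eq_sum (pow_mk_modXPowCon_eq_zero hf N),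
    (RingCon.eq _).2 (modXPowCon_expPS hf N)]
  simp only [← RingCon.mkₐ_apply ℚ (c := modXPowCon R N), map_sum, map_smul, map_pow]

theorem expPS_add_of_commute {f g : R⟦X⟧} (hf : constantCoeff f = 0) (hg : constantCoeff g = 0)
    (hfg : Commute f g) : expPS (f + g) = expPS f * expPS g := by
  refine eq_of_forall_modXPowCon fun N => (RingCon.eq _).1 ?_
  have hfg0 : constantCoeff (f + g) = 0 := by rw [map_add, hf, hg, add_zero]
  rw [RingCon.coe_mul, coe_expPS_modXPowCon hf, coe_expPS_modXPowCon hg,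
    coe_expPS_modXPowCon hfg0, RingCon.coe_add]
  exact IsNilpotent.exp_add_of_commute (hfg.map (RingCon.mk' _))
    ⟨N, pow_mk_modXPowCon_eq_zero hf N⟩ ⟨N, pow_mk_modXPowCon_eq_zero hg N⟩

theorem map_expPS {S : Type*} [Ring S] [Algebra ℚ S] (ψ : R →+* S) (f : R⟦X⟧) :
    map ψ (expPS f) = expPS (map ψ f) := by
  ext n
  simp [expPS, map_sum, map_rat_smul, ← map_pow]

theorem intertwine_of_intertwine_expPS {a : R} {f g : R⟦X⟧} (hf : constantCoeff f = 0)
    (hg : constantCoeff g = 0) (h : C a * expPS f = expPS g * C a) : C a * f = g * C a := by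
  ext n
  rw [coeff_C_mul, coeff_mul_C]
  induction n using Nat.strong_induction_on with
  | _ n ih =>
  obtain rfl | hn := Nat.eq_zero_or_pos n
  · simp [hf, hg]
  have key := congrArg (coeff n) h
  simp only [coeff_C_mul, coeff_mul_C, expPS, coeff_mk, mul_sum, sum_mul, mul_smul_comm,
    smul_mul_assoc] at key
  have h1 : 1 ∈ range (n + 1) := mem_range.2 (by omega)
  rw [← add_sum_erase _ _ h1, ← add_sum_erase _ _ h1] at key
  have hrest : ∀ k ∈ (range (n + 1)).erase 1,
      (k ! : ℚ)⁻¹ • (a * coeff n (f ^ k)) = (k ! : ℚ)⁻¹ • (coeff n (g ^ k) * a) := by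
    intro k hk
    rw [mem_erase] at hk
    rcases k with _ | k
    · simp [coeff_one, hn.ne']
    · rw [intertwine_coeff_pow hf hg ih (k + 1) n (by omega)]
  simpa using add_right_cancel (key.trans (congrArg _ (sum_congr rfl hrest).symm))

end Exp

section Derivative

variable {S : Type*} [CommRing S]

theorem modXPowCon_derivative {f g : S⟦X⟧} {N : ℕ} (h : modXPowCon S (N + 1) f g) :
    modXPowCon S N (d⁄dX S f) (d⁄dX S g) := fun m hm => by
  rw [coeff_derivative, coeff_derivative, h (m + 1) (by omega)]

variable [Algebra ℚ S]

theorem derivative_sum_range_inv_factorial_smul_pow (f : S⟦X⟧) (N : ℕ) :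
    d⁄dX S (∑ k ∈ range (N + 1), (k ! : ℚ)⁻¹ • f ^ k) =
      (∑ k ∈ range N, (k ! : ℚ)⁻¹ • f ^ k) * d⁄dX S f := by
  induction N with
  | zero => simp
  | succ N ih =>
    rw [sum_range_succ, map_add, ih, map_rat_smul, derivative_pow, sum_range_succ, add_mul,
      Nat.add_sub_cancel, ← nsmul_eq_mul, ← Nat.cast_smul_eq_nsmul ℚ, smul_mul_assoc,
      smul_mul_assoc, smul_smul]
    congr 2
    rw [Nat.factorial_succ]
    push_cast
    field_simp

theorem derivative_expPS {f : S⟦X⟧} (hf : constantCoeff f = 0) :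
    d⁄dX S (expPS f) = expPS f * d⁄dX S f := by
  refine eq_of_forall_modXPowCon fun N => ?_
  have h := modXPowCon_derivative (modXPowCon_expPS hf (N + 1))
  rw [derivative_sum_range_inv_factorial_smul_pow] at h
  exact (modXPowCon S N).trans h <| (modXPowCon S N).mul
    ((modXPowCon S N).symm (modXPowCon_expPS hf N)) ((modXPowCon S N).refl _)

end Derivative

section Geometric

variable {R : Type*} [Ring R]

noncomputable def geomSeries (c : R) : R⟦X⟧ := mk fun n => c ^ n

theorem geomSeries_mul_one_sub_C_mul_X (c : R) : geomSeries c * (1 - C c * X) = 1 := by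
  ext (_ | n)
  · simp [geomSeries]
  · rw [mul_sub, mul_one, ← mul_assoc, map_sub, coeff_succ_mul_X, coeff_mul_C, geomSeries,
      coeff_mk, coeff_mk, coeff_one, ← pow_succ, sub_self, if_neg n.succ_ne_zero]

theorem commute_geomSeries {c : R} (hc : ∀ x, Commute c x) (g : R⟦X⟧) :
    Commute (geomSeries c) g :=
  commute_of_forall_coeff_commute (fun n x => by simpa [geomSeries] using (hc x).pow_left n) g

theorem intertwine_geomSeries_mul {a c d : R} (hc : ∀ x, Commute c x) (hd : ∀ x, Commute d x)
    {f g : R⟦X⟧} (h : C a * ((1 - C c * X) * f) = (1 - C d * X) * g * C a) :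
    C a * (geomSeries d * f) = geomSeries c * g * C a := by
  calc C a * (geomSeries d * f)
      = geomSeries d * (C a * (geomSeries c * ((1 - C c * X) * f))) := by
        rw [← mul_assoc (geomSeries c), geomSeries_mul_one_sub_C_mul_X, one_mul,
          (commute_geomSeries hd (C a)).left_comm]
    _ = geomSeries d * (geomSeries c * (C a * ((1 - C c * X) * f))) := by
        rw [← (commute_geomSeries hc (C a)).left_comm]
    _ = geomSeries c * g * C a := by
        rw [h, (commute_geomSeries hd _).left_comm, ← mul_assoc (geomSeries d),
          ← mul_assoc (geomSeries d), geomSeries_mul_one_sub_C_mul_X, one_mul, mul_assoc]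

variable [Algebra ℚ R]

-- `log (1 / (1 - c X))`; the constant coefficient is `(0 : ℚ)⁻¹ • 1 = 0`.
noncomputable def logGeomSeries (c : R) : R⟦X⟧ := mk fun n => (n : ℚ)⁻¹ • c ^ n

@[simp]
theorem constantCoeff_logGeomSeries (c : R) : constantCoeff (logGeomSeries c) = 0 := by
  simp [logGeomSeries, ← coeff_zero_eq_constantCoeff_apply]

theorem commute_logGeomSeries {c : R} (hc : ∀ x, Commute c x) (g : R⟦X⟧) :
    Commute (logGeomSeries c) g :=
  commute_of_forall_coeff_commute
    (fun n x => by simpa [logGeomSeries] using ((hc x).pow_left n).smul_left (n : ℚ)⁻¹) g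

end Geometric

theorem expPS_logGeomSeries_one : expPS (logGeomSeries (1 : ℚ)) = geomSeries 1 := by
  set E := expPS (logGeomSeries (1 : ℚ))
  have hgeom : geomSeries (1 : ℚ) = mk 1 := by ext; simp [geomSeries]
  have hderiv : d⁄dX ℚ (logGeomSeries (1 : ℚ)) = mk 1 := by
    ext n
    rw [coeff_derivative]
    simp only [logGeomSeries, one_pow, smul_eq_mul, mul_one, coeff_mk, Nat.cast_add, Nat.cast_one,
      Pi.one_apply]
    field_simp
  have hinv : E * (1 - X) = 1 := by
    refine derivative.ext ?_ (by simp [E])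
    rw [Derivation.leibniz, derivative_expPS (constantCoeff_logGeomSeries 1), hderiv]
    simp only [map_sub, derivative_one, derivative_X, smul_eq_mul]
    linear_combination E * mk_one_mul_one_sub_eq_one (S := ℚ)
  calc E = E * (1 - X) * mk 1 := by
        rw [mul_assoc, mul_comm (1 - X), mk_one_mul_one_sub_eq_one, mul_one]
    _ = geomSeries 1 := by rw [hinv, one_mul, hgeom]

section Rescale

variable {R : Type*} [Ring R]

-- `f(X) ↦ f(c X)`
noncomputable def rescaleCentral (c : R) (hc : ∀ x, Commute c x) : R⟦X⟧ →+* R⟦X⟧ where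
  toFun f := mk fun n => c ^ n * coeff n f
  map_zero' := by ext; simp
  map_add' f g := by ext; simp [mul_add]
  map_one' := by
    ext n
    simp only [coeff_mk, coeff_one]
    split_ifs with h <;> simp [h]
  map_mul' f g := by
    ext n
    simp only [coeff_mk, coeff_mul, mul_sum]
    refine sum_congr rfl fun ⟨i, j⟩ hij => ?_
    rw [HasAntidiagonal.mem_antidiagonal] at hij
    rw [← hij, pow_add, mul_assoc, ((hc _).pow_left j).left_comm, ← mul_assoc]

@[simp]
theorem coeff_rescaleCentral {c : R} (hc : ∀ x, Commute c x) (f : R⟦X⟧) (n : ℕ) :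
    coeff n (rescaleCentral c hc f) = c ^ n * coeff n f := by
  simp [rescaleCentral]

@[simp]
theorem constantCoeff_rescaleCentral {c : R} (hc : ∀ x, Commute c x) (f : R⟦X⟧) :
    constantCoeff (rescaleCentral c hc f) = constantCoeff f := by
  rw [← coeff_zero_eq_constantCoeff_apply, coeff_rescaleCentral, pow_zero, one_mul,
    coeff_zero_eq_constantCoeff_apply]

theorem intertwine_one_sub_C_mul_X_mul_mk {A c c' t : R} (hcc' : c * c' = 1)
    (hc' : ∀ x, Commute c' x) {H : ℕ → R}
    (hA : ∀ n : ℕ, A * (H n - c' * (if n = 0 then 0 else H (n - 1))) =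
      (c' ^ n * H n - t * (c * c' ^ n) * (if n = 0 then 0 else H (n - 1))) * A) :
    C A * ((1 - C c' * X) * mk H) = (1 - C t * X) * rescaleCentral c' hc' (mk H) * C A := by
  ext (_ | n)
  · simpa using hA 0
  · have h := hA (n + 1)
    have hcn : c * c' ^ (n + 1) = c' ^ n := by rw [pow_succ', ← mul_assoc, hcc', one_mul]
    rw [if_neg n.succ_ne_zero, Nat.add_sub_cancel, hcn] at h
    simpa [sub_mul, mul_assoc, coeff_succ_X_mul] using h

variable [Algebra ℚ R]

theorem rescaleCentral_expPS {c : R} (hc : ∀ x, Commute c x) (f : R⟦X⟧) :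
    rescaleCentral c hc (expPS f) = expPS (rescaleCentral c hc f) := by
  ext n
  simp [expPS, mul_sum, ← map_pow]

theorem expPS_logGeomSeries {c : R} (hc : ∀ x, Commute c x) :
    expPS (logGeomSeries c) = geomSeries c := by
  have hlog : logGeomSeries c = rescaleCentral c hc (map (algebraMap ℚ R) (logGeomSeries 1)) := by
    ext n
    simp [logGeomSeries, Algebra.smul_def, Algebra.commutes]
  have hgeom : geomSeries c = rescaleCentral c hc (map (algebraMap ℚ R) (geomSeries 1)) := by
    ext n
    simp [geomSeries]
  rw [hlog, hgeom, ← rescaleCentral_expPS, ← map_expPS, expPS_logGeomSeries_one]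

end Rescale

end PowerSeries

open PowerSeries

/-- Let `R` be an associative unital `ℚ`-algebra, `A ∈ R`, `γ ∈ R` a
central unit (with two-sided inverse `γ'`, so `γ⁻¹ = γ'` and `γ^{-n} = γ'^n`,
`γ^{-n+1} = γ * γ'^n`), `t ∈ R` central, and `(P_n)_{n ≥ 1}` a sequence in `R`.
Define `H_n` for `n ≥ 0` by `∑_{n ≥ 0} H_n z^n = exp(∑_{n ≥ 1} P_n z^n / n)`
(so `H_0 = 1`), and set `H_{-1} = 0`.  If
`A (H_n - γ⁻¹ H_{n-1}) = (γ^{-n} H_n - t γ^{-n+1} H_{n-1}) A` for all `n ≥ 0`, then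
`A P_n - γ^{-n} P_n A = A (γ^{-n} - t^n)` for all `n ≥ 1`. -/
theorem stmt_9 {R : Type*} [Ring R] [Algebra ℚ R] (A γ γ' t : R)
    (hγ : ∀ x : R, γ * x = x * γ) (ht : ∀ x : R, t * x = x * t)
    (hγγ' : γ * γ' = 1) (hγ'γ : γ' * γ = 1) (P H : ℕ → R)
    (hH : (PowerSeries.mk H : PowerSeries R) =
      expPS (PowerSeries.mk fun n => if n = 0 then 0 else (n : ℚ)⁻¹ • P n))
    (hA : ∀ n : ℕ, A * (H n - γ' * (if n = 0 then 0 else H (n - 1))) =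
      (γ' ^ n * H n - t * (γ * γ' ^ n) * (if n = 0 then 0 else H (n - 1))) * A) :
    ∀ n : ℕ, 1 ≤ n → A * P n - γ' ^ n * (P n * A) = A * (γ' ^ n - t ^ n) := by
  have hγ' : ∀ x, Commute γ' x := fun x =>
    Commute.units_inv_left (u := ⟨γ, γ', hγγ', hγ'γ⟩) (hγ x)
  set F : R⟦X⟧ := mk fun n => if n = 0 then 0 else (n : ℚ)⁻¹ • P n with hF
  have hF0 : constantCoeff F = 0 := by simp [hF, ← coeff_zero_eq_constantCoeff_apply]
  have hexp : C A * expPS (logGeomSeries t + F) =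
      expPS (logGeomSeries γ' + rescaleCentral γ' hγ' F) * C A := by
    rw [expPS_add_of_commute (constantCoeff_logGeomSeries t) hF0 (commute_logGeomSeries ht F),
      expPS_add_of_commute (constantCoeff_logGeomSeries γ') (by simpa using hF0)
        (commute_logGeomSeries hγ' _), expPS_logGeomSeries ht, expPS_logGeomSeries hγ',
      ← rescaleCentral_expPS, ← hH]
    exact intertwine_geomSeries_mul hγ' ht (intertwine_one_sub_C_mul_X_mul_mk hγγ' hγ' hA)
  have hlog := intertwine_of_intertwine_expPS (by simpa using hF0) (by simpa using hF0) hexp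
  intro n hn
  have hn0 : n ≠ 0 := by omega
  have hcoeff := congrArg (coeff n) hlog
  simp only [coeff_C_mul, coeff_mul_C, map_add, logGeomSeries, hF, coeff_rescaleCentral, coeff_mk,
    if_neg hn0, mul_add, add_mul, mul_smul_comm, smul_mul_assoc, ← smul_add] at hcoeff
  have hcoeff' :=
    smul_right_injective R (inv_ne_zero (Nat.cast_ne_zero.2 hn0 : (n : ℚ) ≠ 0)) hcoeff
  rw [mul_sub, ← ((hγ' A).pow_left n).eq, ← mul_assoc, sub_eq_sub_iff_add_eq_add, add_comm]
  exact hcoeff'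
end
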